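/- arXiv:1904.06607 — 9 statements merged into one kernel-verified Lean document; each statement's English description precedes it below -/
import Mathlib

section
/- Let (𝔫, ⟨·|·⟩) be a pseudo H-type Lie algebra. Then 𝔫 = 𝔫₋₁ ⊕ 𝔫₋₂ is a non-degenerate fundamental graded Lie algebra of the second kind; concretely: (a) the real linear span of {⁅x,y⁆ : x, y ∈ 𝔫₋₁} is equal to the center 𝔫₋₂; and (b) if x ∈ 𝔫₋₁ satisfies ⁅x,y⁆ = 0 for all y ∈ 𝔫₋₁, then x = 0. -/
/-- The center of a Lie algebra, as a submodule. -/
def ctr (L : Type*) [LieRing L] [LieAlgebra ℝ L] : Submodule ℝ L where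
  carrier := {z | ∀ x : L, ⁅z, x⁆ = 0}
  add_mem' := by
    intro a b ha hb x
    rw [add_lie, ha x, hb x, add_zero]
  zero_mem' := by
    intro x
    exact zero_lie x
  smul_mem' := by
    intro c a ha x
    rw [smul_lie, ha x, smul_zero]

/-- the FGLA associated with a pseudo H-type Lie algebra is a
non-degenerate fundamental graded Lie algebra of the second kind:
(a) the span of brackets of elements of 𝔫₋₁ is the center 𝔫₋₂, and
(b) 𝔫₋₁ ∋ x with ⁅x, 𝔫₋₁⁆ = 0 implies x = 0. -/
theorem stmt1
    (L : Type*) [LieRing L] [LieAlgebra ℝ L] [FiniteDimensional ℝ L]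
    (B : L →ₗ[ℝ] L →ₗ[ℝ] ℝ)
    (hsymm : ∀ a b : L, B a b = B b a)
    (hnondeg : ∀ a : L, (∀ b : L, B a b = 0) → a = 0)
    (h2step₁ : ∃ a b : L, ⁅a, b⁆ ≠ 0)
    (h2step₂ : ∀ a b c : L, ⁅a, ⁅b, c⁆⁆ = 0)
    (hctrnd : ∀ z ∈ ctr L, (∀ w ∈ ctr L, B z w = 0) → z = 0)
    (n1 : Submodule ℝ L)
    (hn1 : ∀ x : L, x ∈ n1 ↔ ∀ z ∈ ctr L, B x z = 0)
    (J : L → L →ₗ[ℝ] L)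
    (hJmap : ∀ z ∈ ctr L, ∀ x ∈ n1, J z x ∈ n1)
    (hJdef : ∀ z ∈ ctr L, ∀ x ∈ n1, ∀ y ∈ n1, B (J z x) y = B z ⁅x, y⁆)
    (hJsq : ∀ z ∈ ctr L, ∀ x ∈ n1, J z (J z x) = -(B z z) • x) :
    Submodule.span ℝ {w : L | ∃ x ∈ n1, ∃ y ∈ n1, w = ⁅x, y⁆} = ctr L ∧
    ∀ x ∈ n1, (∀ y ∈ n1, ⁅x, y⁆ = 0) → x = 0 := by
  classical
  -- every bracket is central
  have hbr : ∀ a b : L, ⁅a, b⁆ ∈ ctr L := by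
    intro a b x
    have h := h2step₂ x a b
    rw [← lie_skew, h, neg_zero]
  -- the map ctr → Dual ctr induced by B
  set ψ : (ctr L) →ₗ[ℝ] Module.Dual ℝ (ctr L) :=
    (B.compl₂ (ctr L).subtype) ∘ₗ (ctr L).subtype with hψ
  have hψapply : ∀ (z w : ctr L), ψ z w = B z w := fun z w => rfl
  have hψinj : Function.Injective ψ := by
    rw [← LinearMap.ker_eq_bot, LinearMap.ker_eq_bot']
    intro z hz
    have : (z : L) = 0 := by
      apply hctrnd z z.2
      intro w hw
      have := congrArg (fun f => f ⟨w, hw⟩) hz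
      simpa [hψapply] using this
    exact Subtype.ext this
  have hψsurj : Function.Surjective ψ :=
    (LinearMap.injective_iff_surjective_of_finrank_eq_finrank
      (Subspace.dual_finrank_eq (V := (ctr L))).symm).mp hψinj
  -- decomposition L = n1 + ctr
  have hdec : ∀ a : L, ∃ x ∈ n1, ∃ z ∈ ctr L, a = x + z := by
    intro a
    obtain ⟨z, hz⟩ := hψsurj ((B a) ∘ₗ (ctr L).subtype)
    refine ⟨a - z, ?_, z, z.2, by abel⟩
    rw [hn1]
    intro w hw
    have h3 : B (z : L) w = B a w := by
      simpa [hψapply] using congrArg (fun f => f (⟨w, hw⟩ : ctr L)) hz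
    simp only [map_sub, LinearMap.sub_apply, h3]
    ring
  -- B is nondegenerate on n1
  have hn1nd : ∀ u ∈ n1, (∀ y ∈ n1, B u y = 0) → u = 0 := by
    intro u hu h
    apply hnondeg
    intro b
    obtain ⟨y, hy, z, hz, rfl⟩ := hdec b
    rw [map_add, h y hy, (hn1 u).mp hu z hz, add_zero]
  -- a nonzero element of n1
  obtain ⟨a, b, hab⟩ := h2step₁
  obtain ⟨xa, hxa, za, hza, rfl⟩ := hdec a
  obtain ⟨xb, hxb, zb, hzb, rfl⟩ := hdec b
  have hbrab : ⁅xa + za, xb + zb⁆ = ⁅xa, xb⁆ := by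
    rw [add_lie, lie_add, lie_add, hza xb, hza zb, ← lie_skew xa zb, hzb xa]
    simp
  have hab' : ⁅xa, xb⁆ ≠ 0 := hbrab ▸ hab
  have hxa0 : xa ≠ 0 := by
    intro h
    apply hab'
    rw [h, zero_lie]
  -- additivity of J in the central variable, on n1
  have hJadd : ∀ z ∈ ctr L, ∀ w ∈ ctr L, ∀ x ∈ n1,
      J (z + w) x = J z x + J w x := by
    intro z hz w hw x hx
    have h1 : J (z + w) x - (J z x + J w x) ∈ n1 := by
      refine Submodule.sub_mem _ (hJmap _ ((ctr L).add_mem hz hw) _ hx)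
        (Submodule.add_mem _ (hJmap _ hz _ hx) (hJmap _ hw _ hx))
    have h2 : J (z + w) x - (J z x + J w x) = 0 := by
      apply hn1nd _ h1
      intro y hy
      rw [map_sub, map_add, LinearMap.sub_apply, LinearMap.add_apply,
        hJdef _ ((ctr L).add_mem hz hw) _ hx _ hy, hJdef _ hz _ hx _ hy,
        hJdef _ hw _ hx _ hy, map_add, LinearMap.add_apply]
      ring
    exact sub_eq_zero.mp h2
  -- T = 0 : a central element orthogonal to all brackets of n1 is zero
  have hT0 : ∀ u ∈ ctr L, (∀ x ∈ n1, ∀ y ∈ n1, B u ⁅x, y⁆ = 0) → u = 0 := by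
    intro u hu hperp
    have hJu0 : ∀ x ∈ n1, J u x = 0 := by
      intro x hx
      apply hn1nd _ (hJmap _ hu _ hx)
      intro y hy
      rw [hJdef _ hu _ hx _ hy]
      exact hperp x hx y hy
    have key : ∀ v ∈ ctr L, B (u + v) (u + v) = B v v := by
      intro v hv
      have hc : u + v ∈ ctr L := (ctr L).add_mem hu hv
      have e1 : J (u + v) ((J (u + v)) xa) = -(B (u + v) (u + v)) • xa :=
        hJsq _ hc _ hxa
      have e2 : J (u + v) xa = J v xa := by
        rw [hJadd _ hu _ hv _ hxa, hJu0 _ hxa, zero_add]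
      have hJvxa : J v xa ∈ n1 := hJmap _ hv _ hxa
      have e3 : J (u + v) (J v xa) = J v (J v xa) := by
        rw [hJadd _ hu _ hv _ hJvxa, hJu0 _ hJvxa, zero_add]
      rw [e2, e3, hJsq _ hv _ hxa] at e1
      have : (-(B v v) - -(B (u + v) (u + v))) • xa = 0 := by
        rw [sub_smul, e1, sub_self]
      rcases smul_eq_zero.mp this with h | h
      · linarith [sub_eq_zero.mp (by linarith [h] : (-(B v v) - -(B (u + v) (u + v))) = 0)]
      · exact absurd h hxa0
    have huu : B u u = 0 := by
      have := key 0 (ctr L).zero_mem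
      simpa using this
    apply hctrnd u hu
    intro w hw
    have := key w hw
    simp only [map_add, LinearMap.add_apply] at this
    rw [huu, hsymm w u] at this
    linarith
  constructor
  · -- (a)
    apply le_antisymm
    · rw [Submodule.span_le]
      rintro w ⟨x, hx, y, hy, rfl⟩
      exact hbr x y
    · intro z hz
      by_contra hzS
      set S := Submodule.span ℝ {w : L | ∃ x ∈ n1, ∃ y ∈ n1, w = ⁅x, y⁆} with hS
      have hqz : S.mkQ z ≠ 0 := by
        simpa [Submodule.Quotient.mk_eq_zero] using hzS
      obtain ⟨f, hf⟩ : ∃ f : Module.Dual ℝ (L ⧸ S), f (S.mkQ z) ≠ 0 := by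
        by_contra h
        push_neg at h
        exact hqz ((Module.forall_dual_apply_eq_zero_iff ℝ _).mp h)
      obtain ⟨u, hu⟩ := hψsurj ((f ∘ₗ S.mkQ) ∘ₗ (ctr L).subtype)
      have huval : ∀ w : L, ∀ hw : w ∈ ctr L, B (u : L) w = f (S.mkQ w) := by
        intro w hw
        have := congrArg (fun g => g ⟨w, hw⟩) hu
        simpa [hψapply] using this
      have hu0 : (u : L) = 0 := by
        apply hT0 _ u.2
        intro x hx y hy
        rw [huval _ (hbr x y)]
        have hmem : ⁅x, y⁆ ∈ S := Submodule.subset_span ⟨x, hx, y, hy, rfl⟩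
        have h0 : S.mkQ ⁅x, y⁆ = 0 := by
          rwa [Submodule.mkQ_apply, Submodule.Quotient.mk_eq_zero]
        rw [h0, map_zero]
      have := huval z hz
      rw [hu0] at this
      simp only [map_zero, LinearMap.zero_apply] at this
      exact hf this.symm
  · -- (b)
    intro x hx hxy
    -- there is a central element of nonzero square
    have hctr0 : ⁅xa, xb⁆ ∈ ctr L := hbr xa xb
    have hctrne : ⁅xa, xb⁆ ≠ 0 := hab'
    obtain ⟨z, hz, hzz⟩ : ∃ z ∈ ctr L, B z z ≠ 0 := by
      by_contra h
      push_neg at h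
      apply hctrne
      apply hctrnd _ hctr0
      intro w hw
      have h1 := h _ ((ctr L).add_mem hctr0 hw)
      have h2 := h _ hctr0
      have h3 := h _ hw
      simp only [map_add, LinearMap.add_apply] at h1
      rw [hsymm w ⁅xa, xb⁆] at h1
      linarith
    have hJzx : J z x = 0 := by
      apply hn1nd _ (hJmap _ hz _ hx)
      intro y hy
      rw [hJdef _ hz _ hx _ hy, hxy y hy, map_zero]
    have := hJsq _ hz _ hx
    rw [hJzx, map_zero] at this
    rcases smul_eq_zero.mp this.symm with h | h
    · exact absurd (neg_eq_zero.mp h) hzz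
    · exact h
end

section
/- Let (𝔫 = 𝔫₋₁ ⊕ 𝔫₋₂, ⟨·|·⟩) be a pseudo H-type Lie algebra and let α, β be nonzero real numbers. Define a new scalar product ⟨·|·⟩′ on 𝔫 by ⟨x|y⟩′ = α⟨x|y⟩ for x, y ∈ 𝔫₋₁, ⟨z|w⟩′ = β⟨z|w⟩ for z, w ∈ 𝔫₋₂, and ⟨𝔫₋₁|𝔫₋₂⟩′ = 0. Then (𝔫, ⟨·|·⟩′) is a pseudo H-type Lie algebra if and only if α² = β. -/
/-!
If `α² = β`, then `J′_z = α J_z` satisfies both the defining relation and the Clifford relation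
for `⟨·|·⟩′`. Conversely, comparing the defining relations gives `α J′_z = β J_z` on `𝔫₋₁`, so
`α² J′_z² = β² J_z²`, i.e. `-α²β⟨z|z⟩ = -β²⟨z|z⟩`; choosing `z` central with `⟨z|z⟩ ≠ 0` (it
exists by polarization, the center being nonzero and non-degenerate) forces `α² = β`.
-/

section BilinearForm

variable {K V : Type*} [Field K] [AddCommGroup V] [Module K V]

theorem exists_mem_apply_self_ne_zero [NeZero (2 : K)] {B : V →ₗ[K] V →ₗ[K] K}
    (hsymm : ∀ a b, B a b = B b a) {p : Submodule K V}
    (hnd : ∀ z ∈ p, (∀ w ∈ p, B z w = 0) → z = 0) (hp : p ≠ ⊥) :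
    ∃ z ∈ p, B z z ≠ 0 := by
  by_contra! h
  refine hp ((Submodule.eq_bot_iff p).2 fun z hz => hnd z hz fun w hw => ?_)
  have hzw := h (z + w) (p.add_mem hz hw)
  simp only [map_add, LinearMap.add_apply, h z hz, h w hw, hsymm w z] at hzw
  have h2 : (2 : K) * B z w = 0 := by linear_combination hzw
  exact (mul_eq_zero.1 h2).resolve_left two_ne_zero

theorem nondegenerate_on_of_codisjoint {B : V →ₗ[K] V →ₗ[K] K}
    (hnd : ∀ a, (∀ b, B a b = 0) → a = 0) {p q : Submodule K V} (hpq : Codisjoint p q)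
    (horth : ∀ x ∈ p, ∀ z ∈ q, B x z = 0) : ∀ x ∈ p, (∀ y ∈ p, B x y = 0) → x = 0 := by
  intro x hx h
  refine hnd x fun b => ?_
  obtain ⟨y, w, hy, hw, rfl⟩ := Submodule.codisjoint_iff_exists_add_eq.1 hpq b
  rw [map_add, h y hy, horth x hx w hw, add_zero]

theorem eq_of_forall_mem_apply_eq {B : V →ₗ[K] V →ₗ[K] K} {p : Submodule K V}
    (hnd : ∀ x ∈ p, (∀ y ∈ p, B x y = 0) → x = 0) {x x' : V} (hx : x ∈ p) (hx' : x' ∈ p)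
    (h : ∀ y ∈ p, B x y = B x' y) : x = x' :=
  sub_eq_zero.1 <| hnd _ (p.sub_mem hx hx') fun y hy => by
    rw [map_sub, LinearMap.sub_apply, h y hy, sub_self]

theorem apply_add_of_mem_left {B B' : V →ₗ[K] V →ₗ[K] K} {p q : Submodule K V} {α : K}
    {x z y : V} (hx : x ∈ p) (hz : z ∈ q) (hy : y ∈ p) (hB'p : ∀ x ∈ p, ∀ y ∈ p, B' x y = α * B x y)
    (hB'pq : ∀ x ∈ p, ∀ z ∈ q, B' x z = 0 ∧ B' z x = 0) :
    B' (x + z) y = α * B x y := by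
  rw [map_add, LinearMap.add_apply, hB'p x hx y hy, (hB'pq y hy z hz).2, add_zero]

theorem apply_add_of_mem_right {B B' : V →ₗ[K] V →ₗ[K] K} {p q : Submodule K V} {β : K}
    {x z w : V} (hx : x ∈ p) (hz : z ∈ q) (hw : w ∈ q) (hB'q : ∀ z ∈ q, ∀ w ∈ q, B' z w = β * B z w)
    (hB'pq : ∀ x ∈ p, ∀ z ∈ q, B' x z = 0 ∧ B' z x = 0) :
    B' (x + z) w = β * B z w := by
  rw [map_add, LinearMap.add_apply, (hB'pq x hx w hw).1, hB'q z hz w hw, zero_add]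

theorem sq_eq_of_smul_eq_of_sq_eq_neg_smul {T T' : V →ₗ[K] V} {x : V} {α β c : K}
    (hx : x ≠ 0) (hβ : β ≠ 0) (hc : c ≠ 0)
    (h₁ : α • T' x = β • T x) (h₂ : α • T' (T x) = β • T (T x))
    (hT : T (T x) = -c • x) (hT' : T' (T' x) = -(β * c) • x) : α ^ 2 = β := by
  have h : α ^ 2 • T' (T' x) = β ^ 2 • T (T x) := by
    calc α ^ 2 • T' (T' x) = α • T' (α • T' x) := by rw [map_smul, smul_smul, sq]
      _ = β • α • T' (T x) := by rw [h₁, map_smul, smul_comm]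
      _ = β ^ 2 • T (T x) := by rw [h₂, smul_smul, sq]
  rw [hT, hT', smul_smul, smul_smul, ← sub_eq_zero, ← sub_smul] at h
  have h' : β * c * (β - α ^ 2) = 0 := by
    linear_combination (smul_eq_zero.1 h).resolve_right hx
  linear_combination -(mul_eq_zero.1 h').resolve_left (mul_ne_zero hβ hc)

end BilinearForm

section LieAlgebra

variable {L : Type*} [LieRing L] [LieAlgebra ℝ L]

theorem lie_mem_ctr (h2step : ∀ a b c : L, ⁅a, ⁅b, c⁆⁆ = 0) (a b : L) : ⁅a, b⁆ ∈ ctr L :=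
  fun x => by rw [← lie_skew, h2step x a b, neg_zero]

theorem ctr_ne_bot (h2step₁ : ∃ a b : L, ⁅a, b⁆ ≠ 0) (h2step₂ : ∀ a b c : L, ⁅a, ⁅b, c⁆⁆ = 0) :
    ctr L ≠ ⊥ := by
  obtain ⟨a, b, hab⟩ := h2step₁
  exact fun h => hab <| (Submodule.mem_bot ℝ).1 (h ▸ lie_mem_ctr h2step₂ a b)

theorem ne_bot_of_isCompl_ctr (h2step₁ : ∃ a b : L, ⁅a, b⁆ ≠ 0) {n1 : Submodule ℝ L}
    (hcompl : IsCompl n1 (ctr L)) : n1 ≠ ⊥ := by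
  obtain ⟨a, b, hab⟩ := h2step₁
  intro h
  have hctr : ctr L = ⊤ := eq_top_of_bot_isCompl (h ▸ hcompl)
  exact hab ((hctr ▸ Submodule.mem_top : a ∈ ctr L) b)

variable (L) in
/-- The pseudo H-type conditions on the scalar product `B`, with `n1` as `𝔫₋₁` and `J z` as `J_z`;
the 2-step condition on `L` is kept separate. -/
def IsPseudoHTypeForm (B : L →ₗ[ℝ] L →ₗ[ℝ] ℝ) (n1 : Submodule ℝ L) : Prop :=
  (∀ a b : L, B a b = B b a) ∧
  (∀ a : L, (∀ b : L, B a b = 0) → a = 0) ∧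
  (∀ z ∈ ctr L, (∀ w ∈ ctr L, B z w = 0) → z = 0) ∧
  (∀ x : L, x ∈ n1 ↔ ∀ z ∈ ctr L, B x z = 0) ∧
  (∃ J : L → L →ₗ[ℝ] L,
    (∀ z ∈ ctr L, ∀ x ∈ n1, J z x ∈ n1) ∧
    (∀ z ∈ ctr L, ∀ x ∈ n1, ∀ y ∈ n1, B (J z x) y = B z ⁅x, y⁆) ∧
    (∀ z ∈ ctr L, ∀ x ∈ n1, J z (J z x) = -(B z z) • x))

variable {B B' : L →ₗ[ℝ] L →ₗ[ℝ] ℝ} {n1 : Submodule ℝ L} {α β : ℝ}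

theorem IsPseudoHTypeForm.sq_eq_of_rescale (hB : IsPseudoHTypeForm L B n1)
    (hB' : IsPseudoHTypeForm L B' n1) (h2step₁ : ∃ a b : L, ⁅a, b⁆ ≠ 0)
    (h2step₂ : ∀ a b c : L, ⁅a, ⁅b, c⁆⁆ = 0) (hcompl : IsCompl n1 (ctr L)) (hβ : β ≠ 0)
    (hB'1 : ∀ x ∈ n1, ∀ y ∈ n1, B' x y = α * B x y)
    (hB'2 : ∀ z ∈ ctr L, ∀ w ∈ ctr L, B' z w = β * B z w) : α ^ 2 = β := by
  obtain ⟨hsymm, hnd, hctrnd, hn1, J, hJmap, hJdef, hJsq⟩ := hB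
  obtain ⟨-, -, -, -, J', hJ'map, hJ'def, hJ'sq⟩ := hB'
  have hn1nd := nondegenerate_on_of_codisjoint hnd hcompl.codisjoint fun x hx => (hn1 x).1 hx
  have hJ'J : ∀ z ∈ ctr L, ∀ x ∈ n1, α • J' z x = β • J z x := fun z hz x hx =>
    eq_of_forall_mem_apply_eq hn1nd (n1.smul_mem α (hJ'map z hz x hx))
      (n1.smul_mem β (hJmap z hz x hx)) fun y hy => by
        simp only [map_smul, LinearMap.smul_apply, smul_eq_mul]
        rw [← hB'1 _ (hJ'map z hz x hx) y hy, hJ'def z hz x hx y hy,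
          hB'2 z hz _ (lie_mem_ctr h2step₂ x y), hJdef z hz x hx y hy]
  obtain ⟨z, hz, hzz⟩ := exists_mem_apply_self_ne_zero hsymm hctrnd (ctr_ne_bot h2step₁ h2step₂)
  obtain ⟨x, hx, hx0⟩ :=
    Submodule.exists_mem_ne_zero_of_ne_bot (ne_bot_of_isCompl_ctr h2step₁ hcompl)
  refine sq_eq_of_smul_eq_of_sq_eq_neg_smul hx0 hβ hzz (hJ'J z hz x hx)
    (hJ'J z hz _ (hJmap z hz x hx)) (hJsq z hz x hx) ?_
  rw [hJ'sq z hz x hx, hB'2 z hz z hz]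

theorem IsPseudoHTypeForm.rescale (hB : IsPseudoHTypeForm L B n1)
    (h2step₂ : ∀ a b c : L, ⁅a, ⁅b, c⁆⁆ = 0) (hcompl : IsCompl n1 (ctr L))
    (hα : α ≠ 0) (hβ : β ≠ 0) (hαβ : α ^ 2 = β)
    (hB'1 : ∀ x ∈ n1, ∀ y ∈ n1, B' x y = α * B x y)
    (hB'2 : ∀ z ∈ ctr L, ∀ w ∈ ctr L, B' z w = β * B z w)
    (hB'cross : ∀ x ∈ n1, ∀ z ∈ ctr L, B' x z = 0 ∧ B' z x = 0) :
    IsPseudoHTypeForm L B' n1 := by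
  obtain ⟨hsymm, hnd, hctrnd, hn1, J, hJmap, hJdef, hJsq⟩ := hB
  have hdec := Submodule.codisjoint_iff_exists_add_eq.1 hcompl.codisjoint
  have hn1nd := nondegenerate_on_of_codisjoint hnd hcompl.codisjoint fun x hx => (hn1 x).1 hx
  have hB'n1 {x z y} (hx : x ∈ n1) (hz : z ∈ ctr L) (hy : y ∈ n1) :=
    apply_add_of_mem_left (B := B) hx hz hy hB'1 hB'cross
  have hB'ctr {x z w} (hx : x ∈ n1) (hz : z ∈ ctr L) (hw : w ∈ ctr L) :=
    apply_add_of_mem_right (B := B) hx hz hw hB'2 hB'cross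
  have hctr_eq_zero {x z} (hx : x ∈ n1) (hz : z ∈ ctr L)
      (h : ∀ w ∈ ctr L, B' (x + z) w = 0) : z = 0 :=
    hctrnd z hz fun w hw =>
      (mul_eq_zero.1 ((hB'ctr hx hz hw).symm.trans (h w hw))).resolve_left hβ
  refine ⟨fun a b => ?_, fun a ha => ?_, fun z hz h => ?_,
    fun a => ⟨fun ha z hz => ?_, fun ha => ?_⟩,
    fun z => α • J z, fun z hz x hx => ?_, fun z hz x hx y hy => ?_, fun z hz x hx => ?_⟩
  · obtain ⟨x, z, hx, hz, rfl⟩ := hdec a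
    obtain ⟨y, w, hy, hw, rfl⟩ := hdec b
    rw [map_add, hB'n1 hx hz hy, hB'ctr hx hz hw, map_add, hB'n1 hy hw hx, hB'ctr hy hw hz,
      hsymm x y, hsymm z w]
  · obtain ⟨x, z, hx, hz, rfl⟩ := hdec a
    have hx0 : x = 0 :=
      hn1nd x hx fun y hy =>
        (mul_eq_zero.1 ((hB'n1 hx hz hy).symm.trans (ha y))).resolve_left hα
    rw [hx0, hctr_eq_zero hx hz fun w _ => ha w, add_zero]
  · simpa using hctr_eq_zero (zero_mem n1) hz (by simpa using h)
  · exact (hB'cross a ha z hz).1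
  · obtain ⟨x, z, hx, hz, rfl⟩ := hdec a
    rwa [hctr_eq_zero hx hz ha, add_zero]
  · exact n1.smul_mem α (hJmap z hz x hx)
  · rw [LinearMap.smul_apply, hB'1 _ (n1.smul_mem α (hJmap z hz x hx)) y hy,
      hB'2 z hz _ (lie_mem_ctr h2step₂ x y), ← hJdef z hz x hx y hy, ← hαβ, map_smul,
      LinearMap.smul_apply, smul_eq_mul]
    ring
  · rw [LinearMap.smul_apply, LinearMap.smul_apply, map_smul, hJsq z hz x hx,
      hB'2 z hz z hz, smul_smul, smul_smul, ← hαβ]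
    congr 1
    ring

end LieAlgebra

theorem stmt2_general
    (L : Type*) [LieRing L] [LieAlgebra ℝ L]
    (B : L →ₗ[ℝ] L →ₗ[ℝ] ℝ)
    (hsymm : ∀ a b : L, B a b = B b a)
    (hnondeg : ∀ a : L, (∀ b : L, B a b = 0) → a = 0)
    (h2step₁ : ∃ a b : L, ⁅a, b⁆ ≠ 0)
    (h2step₂ : ∀ a b c : L, ⁅a, ⁅b, c⁆⁆ = 0)
    (hctrnd : ∀ z ∈ ctr L, (∀ w ∈ ctr L, B z w = 0) → z = 0)
    (n1 : Submodule ℝ L)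
    (hn1 : ∀ x : L, x ∈ n1 ↔ ∀ z ∈ ctr L, B x z = 0)
    (J : L → L →ₗ[ℝ] L)
    (hJmap : ∀ z ∈ ctr L, ∀ x ∈ n1, J z x ∈ n1)
    (hJdef : ∀ z ∈ ctr L, ∀ x ∈ n1, ∀ y ∈ n1, B (J z x) y = B z ⁅x, y⁆)
    (hJsq : ∀ z ∈ ctr L, ∀ x ∈ n1, J z (J z x) = -(B z z) • x)
    (hcompl : IsCompl n1 (ctr L))
    (α β : ℝ) (hα : α ≠ 0) (hβ : β ≠ 0)
    (B' : L →ₗ[ℝ] L →ₗ[ℝ] ℝ)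
    (hB'1 : ∀ x ∈ n1, ∀ y ∈ n1, B' x y = α * B x y)
    (hB'2 : ∀ z ∈ ctr L, ∀ w ∈ ctr L, B' z w = β * B z w)
    (hB'cross : ∀ x ∈ n1, ∀ z ∈ ctr L, B' x z = 0 ∧ B' z x = 0) :
    ((∀ a b : L, B' a b = B' b a) ∧
     (∀ a : L, (∀ b : L, B' a b = 0) → a = 0) ∧
     (∀ z ∈ ctr L, (∀ w ∈ ctr L, B' z w = 0) → z = 0) ∧
     (∀ x : L, x ∈ n1 ↔ ∀ z ∈ ctr L, B' x z = 0) ∧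
     (∃ J' : L → L →ₗ[ℝ] L,
       (∀ z ∈ ctr L, ∀ x ∈ n1, J' z x ∈ n1) ∧
       (∀ z ∈ ctr L, ∀ x ∈ n1, ∀ y ∈ n1, B' (J' z x) y = B' z ⁅x, y⁆) ∧
       (∀ z ∈ ctr L, ∀ x ∈ n1, J' z (J' z x) = -(B' z z) • x))) ↔
    α ^ 2 = β := by
  have hB : IsPseudoHTypeForm L B n1 := ⟨hsymm, hnondeg, hctrnd, hn1, J, hJmap, hJdef, hJsq⟩
  exact ⟨fun hB' => hB.sq_eq_of_rescale hB' h2step₁ h2step₂ hcompl hβ hB'1 hB'2,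
    fun hαβ => hB.rescale h2step₂ hcompl hα hβ hαβ hB'1 hB'2 hB'cross⟩

/-- Lemma 2.4: rescaling the scalar product of a pseudo H-type Lie
algebra by α on 𝔫₋₁ and β on 𝔫₋₂ again yields a pseudo H-type Lie algebra if and
only if α² = β. -/
theorem stmt2
    (L : Type*) [LieRing L] [LieAlgebra ℝ L] [FiniteDimensional ℝ L]
    (B : L →ₗ[ℝ] L →ₗ[ℝ] ℝ)
    (hsymm : ∀ a b : L, B a b = B b a)
    (hnondeg : ∀ a : L, (∀ b : L, B a b = 0) → a = 0)
    (h2step₁ : ∃ a b : L, ⁅a, b⁆ ≠ 0)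
    (h2step₂ : ∀ a b c : L, ⁅a, ⁅b, c⁆⁆ = 0)
    (hctrnd : ∀ z ∈ ctr L, (∀ w ∈ ctr L, B z w = 0) → z = 0)
    (n1 : Submodule ℝ L)
    (hn1 : ∀ x : L, x ∈ n1 ↔ ∀ z ∈ ctr L, B x z = 0)
    (J : L → L →ₗ[ℝ] L)
    (hJmap : ∀ z ∈ ctr L, ∀ x ∈ n1, J z x ∈ n1)
    (hJdef : ∀ z ∈ ctr L, ∀ x ∈ n1, ∀ y ∈ n1, B (J z x) y = B z ⁅x, y⁆)
    (hJsq : ∀ z ∈ ctr L, ∀ x ∈ n1, J z (J z x) = -(B z z) • x)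
    (hcompl : IsCompl n1 (ctr L))
    (α β : ℝ) (hα : α ≠ 0) (hβ : β ≠ 0)
    (B' : L →ₗ[ℝ] L →ₗ[ℝ] ℝ)
    (hB'1 : ∀ x ∈ n1, ∀ y ∈ n1, B' x y = α * B x y)
    (hB'2 : ∀ z ∈ ctr L, ∀ w ∈ ctr L, B' z w = β * B z w)
    (hB'cross : ∀ x ∈ n1, ∀ z ∈ ctr L, B' x z = 0 ∧ B' z x = 0) :
    ((∀ a b : L, B' a b = B' b a) ∧
     (∀ a : L, (∀ b : L, B' a b = 0) → a = 0) ∧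
     (∀ z ∈ ctr L, (∀ w ∈ ctr L, B' z w = 0) → z = 0) ∧
     (∀ x : L, x ∈ n1 ↔ ∀ z ∈ ctr L, B' x z = 0) ∧
     (∃ J' : L → L →ₗ[ℝ] L,
       (∀ z ∈ ctr L, ∀ x ∈ n1, J' z x ∈ n1) ∧
       (∀ z ∈ ctr L, ∀ x ∈ n1, ∀ y ∈ n1, B' (J' z x) y = B' z ⁅x, y⁆) ∧
       (∀ z ∈ ctr L, ∀ x ∈ n1, J' z (J' z x) = -(B' z z) • x))) ↔
    α ^ 2 = β :=
  stmt2_general L B hsymm hnondeg h2step₁ h2step₂ hctrnd n1 hn1 J hJmap hJdef hJsq hcompl α β hα hβ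
    B' hB'1 hB'2 hB'cross
end

section
/- Let (𝔫⁽¹⁾, ⟨·|·⟩⁽¹⁾) and (𝔫⁽²⁾, ⟨·|·⟩⁽²⁾) be pseudo H-type Lie algebras and suppose φ is a GLA isomorphism of 𝔫⁽¹⁾ onto 𝔫⁽²⁾, i.e., a Lie algebra isomorphism with φ(𝔫₋₁⁽¹⁾) = 𝔫₋₁⁽²⁾ (and hence φ(𝔫₋₂⁽¹⁾) = 𝔫₋₂⁽²⁾). Then there exist a GLA isomorphism ψ of 𝔫⁽¹⁾ onto 𝔫⁽²⁾ and a positive real number α such that: (i) ψ restricted to 𝔫₋₂⁽¹⁾ is an isometry or an anti-isometry, i.e., there is ε ∈ {1,−1} with ⟨ψ(z)|ψ(w)⟩⁽²⁾ = ε⟨z|w⟩⁽¹⁾ for all z, w ∈ 𝔫₋₂⁽¹⁾; and (ii) ψ(x) = α·φ(x) for all x ∈ 𝔫₋₁⁽¹⁾. -/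
theorem lie_eq_zero_of_mem_ctr {L : Type*} [LieRing L] [LieAlgebra ℝ L] {z : L} (hz : z ∈ ctr L)
    (a : L) : ⁅z, a⁆ = 0 :=
  hz a

theorem LieEquiv.map_mem_ctr_iff {L₁ L₂ : Type*} [LieRing L₁] [LieAlgebra ℝ L₁] [LieRing L₂]
    [LieAlgebra ℝ L₂] (φ : L₁ ≃ₗ⁅ℝ⁆ L₂) {z : L₁} : φ z ∈ ctr L₂ ↔ z ∈ ctr L₁ := by
  refine ⟨fun hz x => EquivLike.injective φ ?_, fun hz y => ?_⟩
  · rw [LieEquiv.map_lie, map_zero]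
    exact hz _
  · obtain ⟨x, rfl⟩ := EquivLike.surjective φ y
    rw [← LieEquiv.map_lie, hz, map_zero]

section Clifford

variable {Z A : Type*} [AddCommGroup Z] [Module ℝ Z] [Ring A] [Algebra ℝ A]
  {d β : LinearMap.BilinForm ℝ Z} {P K : Z →ₗ[ℝ] A} {G : A}

theorem anticomm_of_mul_self (hd : d.IsSymm) (hP : ∀ z, P z * P z = -d z z • (1 : A)) (z w : Z) :
    P z * P w + P w * P z = -(2 * d z w) • (1 : A) := by
  have h := hP (z + w)
  simp only [map_add, add_mul, mul_add, LinearMap.add_apply, hP z, hP w, hd.eq w z] at h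
  linear_combination (norm := module) h

theorem mul_mul_eq_smul_of_clifford (hP : ∀ z, P z * P z = -d z z • (1 : A))
    (hK : ∀ z, K z * K z = -β z z • (1 : A)) (hG : ∀ z, G * P z = K z) {z : Z} (hz : d z z ≠ 0) :
    G * P z * G = (β z z / d z z) • P z := by
  have h : G * P z * G * (P z * P z) = -β z z • P z := by
    rw [← mul_assoc, mul_assoc (G * P z), hG, hK, smul_one_mul]
  rw [hP, mul_smul_one] at h
  rw [div_eq_inv_mul, mul_smul, eq_inv_smul_iff₀ hz]
  simpa only [neg_smul, neg_inj] using h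

theorem eq_smul_of_mul_eq_smul_one (hP : ∀ z, P z * P z = -d z z • (1 : A))
    (hinj : Function.Injective P) {z w : Z} (hz : d z z ≠ 0) {κ : ℝ}
    (h : P z * P w = κ • (1 : A)) : w = (-κ / d z z) • z := by
  apply hinj
  have h' : P z * (P z * P w) = κ • P z := by rw [h, mul_smul_one]
  rw [← mul_assoc, hP, smul_one_mul] at h'
  rw [map_smul, div_eq_inv_mul, mul_smul, eq_inv_smul_iff₀ hz]
  linear_combination (norm := module) -h'

theorem sub_smul_mul_eq_smul_one_of_clifford (hd : d.IsSymm) (hβ : β.IsSymm)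
    (hP : ∀ z, P z * P z = -d z z • (1 : A)) (hK : ∀ z, K z * K z = -β z z • (1 : A))
    (hG : ∀ z, G * P z = K z) {z w : Z} (hz : d z z ≠ 0) (hw : d w w ≠ 0) :
    (β z z / d z z - β w w / d w w) • (P z * P w) =
      (2 * (β w w / d w w) * d z w - 2 * β z w) • (1 : A) := by
  have hKK := anticomm_of_mul_self hβ hK z w
  have hPP := anticomm_of_mul_self hd hP z w
  have hKP : ∀ u v, d u u ≠ 0 → K u * K v = (β u u / d u u) • (P u * P v) := fun u v hu => by
    rw [← hG, ← hG, ← mul_assoc, mul_mul_eq_smul_of_clifford hP hK hG hu, smul_mul_assoc]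
  rw [hKP z w hz, hKP w z hw] at hKK
  linear_combination (norm := module) hKK - (β w w / d w w) • hPP

theorem div_eq_div_of_clifford [Nontrivial A] (hd : d.IsSymm) (hβ : β.IsSymm)
    (hP : ∀ z, P z * P z = -d z z • (1 : A)) (hK : ∀ z, K z * K z = -β z z • (1 : A))
    (hG : ∀ z, G * P z = K z) (hinj : Function.Injective P) {z w : Z} (hz : d z z ≠ 0)
    (hw : d w w ≠ 0) : β z z / d z z = β w w / d w w := by
  by_contra hne
  have h := sub_smul_mul_eq_smul_one_of_clifford hd hβ hP hK hG hz hw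
  rw [← eq_inv_smul_iff₀ (sub_ne_zero.2 hne), smul_smul] at h
  obtain ⟨c, rfl⟩ : ∃ c : ℝ, w = c • z := ⟨_, eq_smul_of_mul_eq_smul_one hP hinj hz h⟩
  have hc : c ≠ 0 := by rintro rfl; simp at hw
  refine hne ?_
  simp only [map_smul, LinearMap.smul_apply, smul_eq_mul]
  field_simp

theorem eq_div_mul_of_clifford [Nontrivial A] (hd : d.IsSymm) (hβ : β.IsSymm)
    (hP : ∀ z, P z * P z = -d z z • (1 : A)) (hK : ∀ z, K z * K z = -β z z • (1 : A))
    (hG : ∀ z, G * P z = K z) (hinj : Function.Injective P) {z w : Z} (hz : d z z ≠ 0)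
    (hw : d w w ≠ 0) : β z w = β w w / d w w * d z w := by
  have h := sub_smul_mul_eq_smul_one_of_clifford hd hβ hP hK hG hz hw
  rw [div_eq_div_of_clifford hd hβ hP hK hG hinj hz hw, sub_self, zero_smul, eq_comm,
    smul_eq_zero] at h
  linarith [h.resolve_right one_ne_zero]

theorem exists_eq_smul_of_clifford [FiniteDimensional ℝ Z] [Nontrivial A] (hd : d.IsSymm)
    (hdnd : d.Nondegenerate) (hβ : β.IsSymm)
    (hP : ∀ z, P z * P z = -d z z • (1 : A)) (hK : ∀ z, K z * K z = -β z z • (1 : A))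
    (hG : ∀ z, G * P z = K z) (hinj : Function.Injective P) : ∃ s : ℝ, β = s • d := by
  have : Invertible (2 : ℝ) := invertibleOfNonzero two_ne_zero
  obtain ⟨e, he⟩ :=
    LinearMap.BilinForm.exists_orthogonal_basis (LinearMap.BilinForm.isSymm_iff.1 hd)
  have hane : ∀ i, d (e i) (e i) ≠ 0 := he.not_isOrtho_basis_self_of_separatingLeft hdnd.1
  obtain ⟨s, hs⟩ : ∃ s, ∀ i, β (e i) (e i) / d (e i) (e i) = s := by
    rcases isEmpty_or_nonempty (Fin (Module.finrank ℝ Z)) with _ | ⟨⟨i₀⟩⟩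
    · exact ⟨0, isEmptyElim⟩
    · exact ⟨_, fun i => div_eq_div_of_clifford hd hβ hP hK hG hinj (hane i) (hane i₀)⟩
  refine ⟨s, LinearMap.BilinForm.ext_basis e fun i j => ?_⟩
  rw [eq_div_mul_of_clifford hd hβ hP hK hG hinj (hane i) (hane j), hs]
  rfl

end Clifford

theorem LinearMap.BilinForm.eq_smul_id_of_compl₁₂_eq_smul {Z : Type*} [AddCommGroup Z]
    [Module ℝ Z] {b d : LinearMap.BilinForm ℝ Z} (hb : b.Nondegenerate) {τ : Z →ₗ[ℝ] Z}
    (hτ : ∀ z w, d (τ z) w = b z w) {s : ℝ} (hs : d.compl₁₂ τ τ = s • b) :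
    τ = s • LinearMap.id := by
  ext w
  rw [LinearMap.smul_apply, LinearMap.id_apply, ← sub_eq_zero]
  refine hb.2 _ fun z => ?_
  rw [map_sub, map_smul, ← hτ z (τ w), ← LinearMap.compl₁₂_apply, hs, LinearMap.smul_apply,
    LinearMap.smul_apply, sub_self]

/-- `V` plays the role of `𝔫₋₁` and `ctr L` that of `𝔫₋₂`; the operators `J z` are only
constrained for `z ∈ ctr L` and on `V`. -/
structure IsPseudoHType {L : Type*} [LieRing L] [LieAlgebra ℝ L] (B : L →ₗ[ℝ] L →ₗ[ℝ] ℝ)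
    (V : Submodule ℝ L) (J : L → L →ₗ[ℝ] L) : Prop where
  symm : ∀ a b : L, B a b = B b a
  nondeg : ∀ a : L, (∀ b : L, B a b = 0) → a = 0
  exists_lie_ne_zero : ∃ a b : L, ⁅a, b⁆ ≠ 0
  lie_lie : ∀ a b c : L, ⁅a, ⁅b, c⁆⁆ = 0
  ctr_nondeg : ∀ z ∈ ctr L, (∀ w ∈ ctr L, B z w = 0) → z = 0
  mem_iff : ∀ x : L, x ∈ V ↔ ∀ z ∈ ctr L, B x z = 0
  J_mem : ∀ z ∈ ctr L, ∀ x ∈ V, J z x ∈ V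
  J_apply : ∀ z ∈ ctr L, ∀ x ∈ V, ∀ y ∈ V, B (J z x) y = B z ⁅x, y⁆
  J_J : ∀ z ∈ ctr L, ∀ x ∈ V, J z (J z x) = -(B z z) • x

namespace IsPseudoHType

variable {L : Type*} [LieRing L] [LieAlgebra ℝ L] {B : L →ₗ[ℝ] L →ₗ[ℝ] ℝ} {V : Submodule ℝ L}
  {J : L → L →ₗ[ℝ] L}

theorem lie_mem_ctr (h : IsPseudoHType B V J) (a b : L) : ⁅a, b⁆ ∈ ctr L := fun c => by
  rw [← lie_skew, h.lie_lie, neg_zero]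

theorem nontrivial_ctr (h : IsPseudoHType B V J) : Nontrivial (ctr L) := by
  obtain ⟨a, b, hab⟩ := h.exists_lie_ne_zero
  exact ⟨⟨⟨_, h.lie_mem_ctr a b⟩, 0, fun h0 => hab (congrArg Subtype.val h0)⟩⟩

theorem isSymm (h : IsPseudoHType B V J) : LinearMap.BilinForm.IsSymm B := ⟨h.symm⟩

theorem isSymm_restrict (h : IsPseudoHType B V J) (W : Submodule ℝ L) :
    (LinearMap.BilinForm.restrict B W).IsSymm := ⟨fun x y => h.symm x y⟩

theorem restrict_ctr_nondegenerate (h : IsPseudoHType B V J) :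
    (LinearMap.BilinForm.restrict B (ctr L)).Nondegenerate :=
  (h.isSymm_restrict _).isRefl.nondegenerate_iff_separatingLeft.2 fun z hz =>
    Subtype.ext (h.ctr_nondeg z z.2 fun w hw => hz ⟨w, hw⟩)

theorem orthogonal_ctr (h : IsPseudoHType B V J) :
    LinearMap.BilinForm.orthogonal B (ctr L) = V := by
  ext x
  simp only [LinearMap.BilinForm.mem_orthogonal_iff, h.mem_iff, h.symm x]

theorem comap {L₁ : Type*} [LieRing L₁] [LieAlgebra ℝ L₁] (h : IsPseudoHType B V J)
    (φ : L₁ ≃ₗ⁅ℝ⁆ L) :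
    IsPseudoHType (B.compl₁₂ (φ : L₁ →ₗ[ℝ] L) φ) (V.comap (φ : L₁ →ₗ[ℝ] L))
      (fun z => (φ.symm : L →ₗ[ℝ] L₁) ∘ₗ J (φ z) ∘ₗ (φ : L₁ →ₗ[ℝ] L)) where
  symm a b := h.symm (φ a) (φ b)
  nondeg a ha := EquivLike.injective φ <| by
    rw [map_zero]
    exact h.nondeg _ ((EquivLike.surjective φ).forall.2 ha)
  exists_lie_ne_zero := by
    obtain ⟨a, b, hab⟩ := h.exists_lie_ne_zero
    refine ⟨φ.symm a, φ.symm b, fun h0 => hab ?_⟩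
    rw [← φ.symm.map_lie] at h0
    simpa using congrArg φ h0
  lie_lie a b c := EquivLike.injective φ <| by
    rw [LieEquiv.map_lie, LieEquiv.map_lie, h.lie_lie, map_zero]
  ctr_nondeg z hz hzw := EquivLike.injective φ <| by
    rw [map_zero]
    refine h.ctr_nondeg _ (φ.map_mem_ctr_iff.2 hz) ((EquivLike.surjective φ).forall.2 fun w hw =>
      hzw w (φ.map_mem_ctr_iff.1 hw))
  mem_iff x := by
    change φ x ∈ V ↔ ∀ z ∈ ctr L₁, B (φ x) (φ z) = 0
    refine (h.mem_iff _).trans ⟨fun H z hz => H _ (φ.map_mem_ctr_iff.2 hz), fun H y hy => ?_⟩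
    obtain ⟨z, rfl⟩ := EquivLike.surjective φ y
    exact H z (φ.map_mem_ctr_iff.1 hy)
  J_mem z hz x hx := by
    change φ (φ.symm _) ∈ V
    rw [LieEquiv.apply_symm_apply]
    exact h.J_mem _ (φ.map_mem_ctr_iff.2 hz) _ hx
  J_apply z hz x hx y hy := by
    change B (φ (φ.symm _)) (φ y) = B (φ z) (φ ⁅x, y⁆)
    rw [LieEquiv.apply_symm_apply, LieEquiv.map_lie]
    exact h.J_apply _ (φ.map_mem_ctr_iff.2 hz) _ hx _ hy
  J_J z hz x hx := by
    change φ.symm (J (φ z) (φ (φ.symm (J (φ z) (φ x))))) = -(B (φ z) (φ z)) • x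
    rw [LieEquiv.apply_symm_apply, h.J_J _ (φ.map_mem_ctr_iff.2 hz) (φ x) hx]
    simp

variable [FiniteDimensional ℝ L]

theorem isCompl (h : IsPseudoHType B V J) : IsCompl (ctr L) V :=
  h.orthogonal_ctr ▸ LinearMap.BilinForm.isCompl_orthogonal_of_restrict_nondegenerate
    h.isSymm.isRefl h.restrict_ctr_nondegenerate

theorem eq_of_forall_mem_apply_eq (h : IsPseudoHType B V J) {x y : L} (hx : x ∈ V) (hy : y ∈ V)
    (hxy : ∀ v ∈ V, B x v = B y v) : x = y := by
  rw [← sub_eq_zero]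
  refine h.nondeg _ fun a => ?_
  obtain ⟨z, hz, v, hv, rfl⟩ := Submodule.mem_sup.1
    (h.isCompl.sup_eq_top.symm ▸ Submodule.mem_top : a ∈ ctr L ⊔ V)
  rw [map_add, (h.mem_iff _).1 (V.sub_mem hx hy) z hz, map_sub, LinearMap.sub_apply, hxy v hv,
    sub_self, add_zero]

theorem restrict_nondegenerate (h : IsPseudoHType B V J) :
    (LinearMap.BilinForm.restrict B V).Nondegenerate :=
  (h.isSymm_restrict _).isRefl.nondegenerate_iff_separatingLeft.2 fun x hx => Subtype.ext <|
    h.eq_of_forall_mem_apply_eq x.2 V.zero_mem fun v hv => by simpa using hx ⟨v, hv⟩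

theorem nontrivial_complement (h : IsPseudoHType B V J) : Nontrivial V := by
  rw [Submodule.nontrivial_iff_ne_bot]
  rintro rfl
  obtain ⟨a, b, hab⟩ := h.exists_lie_ne_zero
  exact hab ((eq_top_of_isCompl_bot h.isCompl ▸ Submodule.mem_top : a ∈ ctr L) b)

theorem J_add (h : IsPseudoHType B V J) {z w : L} (hz : z ∈ ctr L) (hw : w ∈ ctr L) {x : L}
    (hx : x ∈ V) : J (z + w) x = J z x + J w x := by
  have hzw : z + w ∈ ctr L := (ctr L).add_mem hz hw
  refine h.eq_of_forall_mem_apply_eq (h.J_mem _ hzw x hx)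
    (V.add_mem (h.J_mem z hz x hx) (h.J_mem w hw x hx)) fun y hy => ?_
  simp [h.J_apply _ hzw x hx y hy, h.J_apply z hz x hx y hy, h.J_apply w hw x hx y hy]

theorem J_smul (h : IsPseudoHType B V J) (c : ℝ) {z : L} (hz : z ∈ ctr L) {x : L}
    (hx : x ∈ V) : J (c • z) x = c • J z x := by
  have hcz : c • z ∈ ctr L := (ctr L).smul_mem c hz
  refine h.eq_of_forall_mem_apply_eq (h.J_mem _ hcz x hx) (V.smul_mem c (h.J_mem z hz x hx))
    fun y hy => ?_
  simp [h.J_apply _ hcz x hx y hy, h.J_apply z hz x hx y hy]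

noncomputable def cliffordMap (h : IsPseudoHType B V J) : ctr L →ₗ[ℝ] Module.End ℝ V where
  toFun z := (J z).restrict (h.J_mem z z.2)
  map_add' z w := by
    ext x
    exact h.J_add z.2 w.2 x.2
  map_smul' c z := by
    ext x
    exact h.J_smul c z.2 x.2

theorem coe_cliffordMap_apply (h : IsPseudoHType B V J) (z : ctr L) (x : V) :
    (h.cliffordMap z x : L) = J z x := rfl

theorem cliffordMap_mul_self (h : IsPseudoHType B V J) (z : ctr L) :
    h.cliffordMap z * h.cliffordMap z = -(LinearMap.BilinForm.restrict B (ctr L) z z) • 1 := by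
  ext x
  exact h.J_J z z.2 x x.2

theorem cliffordMap_injective (h : IsPseudoHType B V J) : Function.Injective h.cliffordMap := by
  have := h.nontrivial_complement
  refine (injective_iff_map_eq_zero _).2 fun m hm => h.restrict_ctr_nondegenerate.1 m fun w => ?_
  have hmw := anticomm_of_mul_self (h.isSymm_restrict _) h.cliffordMap_mul_self m w
  rw [hm, zero_mul, mul_zero, add_zero, eq_comm, smul_eq_zero] at hmw
  linarith [hmw.resolve_right one_ne_zero]

theorem mul_cliffordMap_eq {D : L →ₗ[ℝ] L →ₗ[ℝ] ℝ} {P : L → L →ₗ[ℝ] L}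
    (hB : IsPseudoHType B V J) (hD : IsPseudoHType D V P) {τ : ctr L →ₗ[ℝ] ctr L}
    (hτ : ∀ z w : ctr L, D (τ z) w = B z w) {G : Module.End ℝ V}
    (hG : ∀ x y : V, D (G x) y = B x y) (z : ctr L) :
    G * hB.cliffordMap z = hD.cliffordMap (τ z) := by
  ext x
  refine hD.eq_of_forall_mem_apply_eq (G _).2 (hD.J_mem _ (τ z).2 x x.2) fun y hy => ?_
  rw [Module.End.mul_apply, hG _ ⟨y, hy⟩, hB.coe_cliffordMap_apply, hB.J_apply z z.2 x x.2 y hy,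
    hD.coe_cliffordMap_apply, hD.J_apply _ (τ z).2 x x.2 y hy]
  exact (hτ z ⟨_, hB.lie_mem_ctr x y⟩).symm

theorem exists_eq_mul_on_ctr {D : L →ₗ[ℝ] L →ₗ[ℝ] ℝ} {P : L → L →ₗ[ℝ] L}
    (hB : IsPseudoHType B V J) (hD : IsPseudoHType D V P) :
    ∃ c ≠ 0, ∀ z ∈ ctr L, ∀ w ∈ ctr L, D z w = c * B z w := by
  set b := LinearMap.BilinForm.restrict B (ctr L)
  set d := LinearMap.BilinForm.restrict D (ctr L)
  obtain ⟨τ, hτ⟩ : ∃ τ : ctr L →ₗ[ℝ] ctr L, ∀ z w, d (τ z) w = b z w :=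
    ⟨_, fun z w => b.symmCompOfNondegenerate_left_apply hD.restrict_ctr_nondegenerate w z⟩
  obtain ⟨G, hG⟩ : ∃ G : Module.End ℝ V, ∀ x y : V, D (G x) y = B x y :=
    ⟨_, fun x y => (LinearMap.BilinForm.restrict B V).symmCompOfNondegenerate_left_apply
      hD.restrict_nondegenerate y x⟩
  have := hB.nontrivial_complement
  obtain ⟨s, hs⟩ := exists_eq_smul_of_clifford (β := d.compl₁₂ τ τ) (K := hD.cliffordMap ∘ₗ τ)
    (hB.isSymm_restrict _) hB.restrict_ctr_nondegenerate ⟨fun z w => hD.symm _ _⟩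
    hB.cliffordMap_mul_self (fun z => hD.cliffordMap_mul_self (τ z))
    (hB.mul_cliffordMap_eq hD hτ hG) hB.cliffordMap_injective
  have hτs := LinearMap.BilinForm.eq_smul_id_of_compl₁₂_eq_smul
    hB.restrict_ctr_nondegenerate hτ hs
  have hs0 : s ≠ 0 := by
    rintro rfl
    have := hB.nontrivial_ctr
    refine hB.restrict_ctr_nondegenerate.ne_zero (LinearMap.ext₂ fun z w => ?_)
    rw [LinearMap.zero_apply, LinearMap.zero_apply, ← hτ, hτs]
    simp
  refine ⟨s⁻¹, inv_ne_zero hs0, fun z hz w hw => ?_⟩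
  have hzw := hτ ⟨z, hz⟩ ⟨w, hw⟩
  rw [hτs, LinearMap.smul_apply, LinearMap.id_apply, map_smul] at hzw
  change s * D z w = B z w at hzw
  rw [← hzw, inv_mul_cancel_left₀ hs0]

end IsPseudoHType

section Dilation

variable {K L : Type*} [Field K] [LieRing L] [LieAlgebra K L] {Z V : Submodule K L}

noncomputable def dilationMap (h : IsCompl Z V) (t : K) : L →ₗ[K] L :=
  t • LinearMap.id + (t ^ 2 - t) • Z.projection V h

theorem dilationMap_apply_of_mem_left (h : IsCompl Z V) (t : K) {z : L} (hz : z ∈ Z) :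
    dilationMap h t z = t ^ 2 • z := by
  simp [dilationMap, Submodule.projection_apply_of_mem_left h hz, sub_smul]

theorem dilationMap_apply_of_mem_right (h : IsCompl Z V) (t : K) {x : L} (hx : x ∈ V) :
    dilationMap h t x = t • x := by
  simp [dilationMap, Submodule.projection_apply_of_mem_right h hx]

theorem dilationMap_dilationMap (h : IsCompl Z V) (s t : K) (x : L) :
    dilationMap h s (dilationMap h t x) = dilationMap h (s * t) x := by
  simp only [dilationMap, LinearMap.add_apply, LinearMap.smul_apply, LinearMap.id_apply, map_add,
    map_smul, Submodule.projection_apply_of_mem_left h (Submodule.projection_apply_mem h x)]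
  module

theorem dilationMap_one (h : IsCompl Z V) (x : L) : dilationMap h 1 x = x := by
  simp [dilationMap]

theorem dilationMap_mem_right_iff (h : IsCompl Z V) {t : K} (ht : t ≠ 0) {x : L} :
    dilationMap h t x ∈ V ↔ x ∈ V := by
  refine ⟨fun hx => ?_, fun hx => dilationMap_apply_of_mem_right h t hx ▸ V.smul_mem t hx⟩
  rw [← dilationMap_one h x, ← inv_mul_cancel₀ ht, ← dilationMap_dilationMap,
    dilationMap_apply_of_mem_right h _ hx]
  exact V.smul_mem _ hx

noncomputable def dilation (hZ : ∀ z ∈ Z, ∀ a : L, ⁅z, a⁆ = 0) (hlie : ∀ a b : L, ⁅a, b⁆ ∈ Z)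
    (h : IsCompl Z V) {t : K} (ht : t ≠ 0) : L ≃ₗ⁅K⁆ L :=
  { dilationMap h t with
    map_lie' := by
      intro a b
      have hpZ : ∀ x, Z.projection V h x ∈ Z := Submodule.projection_apply_mem h
      have hpZ' : ∀ x y, ⁅x, Z.projection V h y⁆ = 0 := fun x y => by
        rw [← lie_skew, hZ _ (hpZ y), neg_zero]
      simp only [AddHom.toFun_eq_coe, LinearMap.coe_toAddHom,
        dilationMap_apply_of_mem_left h t (hlie a b)]
      simp only [dilationMap, LinearMap.add_apply, LinearMap.smul_apply, LinearMap.id_apply,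
        add_lie, lie_add, smul_lie, lie_smul, hZ _ (hpZ _), hpZ']
      module
    invFun := dilationMap h t⁻¹
    left_inv := fun x => by
      simp [dilationMap_dilationMap, inv_mul_cancel₀ ht, dilationMap_one]
    right_inv := fun x => by
      simp [dilationMap_dilationMap, mul_inv_cancel₀ ht, dilationMap_one] }

theorem dilation_apply (hZ : ∀ z ∈ Z, ∀ a : L, ⁅z, a⁆ = 0) (hlie : ∀ a b : L, ⁅a, b⁆ ∈ Z)
    (h : IsCompl Z V) {t : K} (ht : t ≠ 0) (x : L) : dilation hZ hlie h ht x = dilationMap h t x :=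
  rfl

end Dilation

theorem exists_pos_pow_four_mul_eq_one_or_neg_one {c : ℝ} (hc : c ≠ 0) :
    ∃ α : ℝ, 0 < α ∧ (α ^ 4 * c = 1 ∨ α ^ 4 * c = -1) := by
  have hc' : 0 < |c| := abs_pos.2 hc
  refine ⟨(√√|c|)⁻¹, by positivity, ?_⟩
  have h4 : (√√|c|)⁻¹ ^ 4 = |c|⁻¹ := by
    rw [inv_pow, show 4 = 2 * 2 from rfl, pow_mul, Real.sq_sqrt (Real.sqrt_nonneg _),
      Real.sq_sqrt hc'.le]
  rw [h4]
  rcases hc.lt_or_gt with hneg | hpos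
  · right; rw [abs_of_neg hneg]; field_simp
  · left; rw [abs_of_pos hpos]; field_simp

theorem stmt3_general
    (L₁ : Type*) [LieRing L₁] [LieAlgebra ℝ L₁] [FiniteDimensional ℝ L₁]
    (B₁ : L₁ →ₗ[ℝ] L₁ →ₗ[ℝ] ℝ)
    (hsymm₁ : ∀ a b : L₁, B₁ a b = B₁ b a)
    (hnondeg₁ : ∀ a : L₁, (∀ b : L₁, B₁ a b = 0) → a = 0)
    (h2stepA₁ : ∃ a b : L₁, ⁅a, b⁆ ≠ 0)
    (h2stepB₁ : ∀ a b c : L₁, ⁅a, ⁅b, c⁆⁆ = 0)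
    (hctrnd₁ : ∀ z ∈ ctr L₁, (∀ w ∈ ctr L₁, B₁ z w = 0) → z = 0)
    (n₁ : Submodule ℝ L₁)
    (hn₁ : ∀ x : L₁, x ∈ n₁ ↔ ∀ z ∈ ctr L₁, B₁ x z = 0)
    (J₁ : L₁ → L₁ →ₗ[ℝ] L₁)
    (hJmap₁ : ∀ z ∈ ctr L₁, ∀ x ∈ n₁, J₁ z x ∈ n₁)
    (hJdef₁ : ∀ z ∈ ctr L₁, ∀ x ∈ n₁, ∀ y ∈ n₁, B₁ (J₁ z x) y = B₁ z ⁅x, y⁆)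
    (hJsq₁ : ∀ z ∈ ctr L₁, ∀ x ∈ n₁, J₁ z (J₁ z x) = -(B₁ z z) • x)
    (L₂ : Type*) [LieRing L₂] [LieAlgebra ℝ L₂]
    (B₂ : L₂ →ₗ[ℝ] L₂ →ₗ[ℝ] ℝ)
    (hsymm₂ : ∀ a b : L₂, B₂ a b = B₂ b a)
    (hnondeg₂ : ∀ a : L₂, (∀ b : L₂, B₂ a b = 0) → a = 0)
    (h2stepA₂ : ∃ a b : L₂, ⁅a, b⁆ ≠ 0)
    (h2stepB₂ : ∀ a b c : L₂, ⁅a, ⁅b, c⁆⁆ = 0)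
    (hctrnd₂ : ∀ z ∈ ctr L₂, (∀ w ∈ ctr L₂, B₂ z w = 0) → z = 0)
    (n₂ : Submodule ℝ L₂)
    (hn₂ : ∀ x : L₂, x ∈ n₂ ↔ ∀ z ∈ ctr L₂, B₂ x z = 0)
    (J₂ : L₂ → L₂ →ₗ[ℝ] L₂)
    (hJmap₂ : ∀ z ∈ ctr L₂, ∀ x ∈ n₂, J₂ z x ∈ n₂)
    (hJdef₂ : ∀ z ∈ ctr L₂, ∀ x ∈ n₂, ∀ y ∈ n₂, B₂ (J₂ z x) y = B₂ z ⁅x, y⁆)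
    (hJsq₂ : ∀ z ∈ ctr L₂, ∀ x ∈ n₂, J₂ z (J₂ z x) = -(B₂ z z) • x)
    (φ : L₁ ≃ₗ⁅ℝ⁆ L₂)
    (hφ : ∀ x : L₁, x ∈ n₁ ↔ φ x ∈ n₂) :
    ∃ (ψ : L₁ ≃ₗ⁅ℝ⁆ L₂) (α ε : ℝ), 0 < α ∧ (ε = 1 ∨ ε = -1) ∧
      (∀ x : L₁, x ∈ n₁ ↔ ψ x ∈ n₂) ∧
      (∀ z ∈ ctr L₁, ∀ w ∈ ctr L₁, B₂ (ψ z) (ψ w) = ε * B₁ z w) ∧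
      (∀ x ∈ n₁, ψ x = α • (φ x : L₂)) := by
  have h₁ : IsPseudoHType B₁ n₁ J₁ :=
    ⟨hsymm₁, hnondeg₁, h2stepA₁, h2stepB₁, hctrnd₁, hn₁, hJmap₁, hJdef₁, hJsq₁⟩
  have h₂ : IsPseudoHType B₂ n₂ J₂ :=
    ⟨hsymm₂, hnondeg₂, h2stepA₂, h2stepB₂, hctrnd₂, hn₂, hJmap₂, hJdef₂, hJsq₂⟩
  have hn : n₂.comap (φ : L₁ →ₗ[ℝ] L₂) = n₁ := Submodule.ext fun x => (hφ x).symm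
  obtain ⟨c, hc, hB₂⟩ := h₁.exists_eq_mul_on_ctr (hn ▸ h₂.comap φ)
  obtain ⟨α, hα, hε⟩ := exists_pos_pow_four_mul_eq_one_or_neg_one hc
  refine ⟨(dilation (fun _ => lie_eq_zero_of_mem_ctr) h₁.lie_mem_ctr h₁.isCompl hα.ne').trans φ, α,
    α ^ 4 * c, hα, hε, fun x => ?_, fun z hz w hw => ?_, fun x hx => ?_⟩
  · rw [LieEquiv.trans_apply, ← hφ, dilation_apply, dilationMap_mem_right_iff _ hα.ne']
  · simp only [LieEquiv.trans_apply, dilation_apply, dilationMap_apply_of_mem_left _ _ hz,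
      dilationMap_apply_of_mem_left _ _ hw, map_smul, LinearMap.smul_apply, smul_eq_mul]
    rw [show B₂ (φ z) (φ w) = c * B₁ z w from hB₂ z hz w hw]
    ring
  · rw [LieEquiv.trans_apply, dilation_apply, dilationMap_apply_of_mem_right _ _ hx, map_smul]

/-- Lemma 2.6: if two pseudo H-type Lie algebras are isomorphic as
graded Lie algebras via φ, then there are a GLA isomorphism ψ and α > 0 such that
ψ is an isometry or anti-isometry on the centers and ψ = α·φ on 𝔫₋₁. -/
theorem stmt3
    (L₁ : Type*) [LieRing L₁] [LieAlgebra ℝ L₁] [FiniteDimensional ℝ L₁]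
    (B₁ : L₁ →ₗ[ℝ] L₁ →ₗ[ℝ] ℝ)
    (hsymm₁ : ∀ a b : L₁, B₁ a b = B₁ b a)
    (hnondeg₁ : ∀ a : L₁, (∀ b : L₁, B₁ a b = 0) → a = 0)
    (h2stepA₁ : ∃ a b : L₁, ⁅a, b⁆ ≠ 0)
    (h2stepB₁ : ∀ a b c : L₁, ⁅a, ⁅b, c⁆⁆ = 0)
    (hctrnd₁ : ∀ z ∈ ctr L₁, (∀ w ∈ ctr L₁, B₁ z w = 0) → z = 0)
    (n₁ : Submodule ℝ L₁)
    (hn₁ : ∀ x : L₁, x ∈ n₁ ↔ ∀ z ∈ ctr L₁, B₁ x z = 0)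
    (J₁ : L₁ → L₁ →ₗ[ℝ] L₁)
    (hJmap₁ : ∀ z ∈ ctr L₁, ∀ x ∈ n₁, J₁ z x ∈ n₁)
    (hJdef₁ : ∀ z ∈ ctr L₁, ∀ x ∈ n₁, ∀ y ∈ n₁, B₁ (J₁ z x) y = B₁ z ⁅x, y⁆)
    (hJsq₁ : ∀ z ∈ ctr L₁, ∀ x ∈ n₁, J₁ z (J₁ z x) = -(B₁ z z) • x)
    (L₂ : Type*) [LieRing L₂] [LieAlgebra ℝ L₂] [FiniteDimensional ℝ L₂]
    (B₂ : L₂ →ₗ[ℝ] L₂ →ₗ[ℝ] ℝ)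
    (hsymm₂ : ∀ a b : L₂, B₂ a b = B₂ b a)
    (hnondeg₂ : ∀ a : L₂, (∀ b : L₂, B₂ a b = 0) → a = 0)
    (h2stepA₂ : ∃ a b : L₂, ⁅a, b⁆ ≠ 0)
    (h2stepB₂ : ∀ a b c : L₂, ⁅a, ⁅b, c⁆⁆ = 0)
    (hctrnd₂ : ∀ z ∈ ctr L₂, (∀ w ∈ ctr L₂, B₂ z w = 0) → z = 0)
    (n₂ : Submodule ℝ L₂)
    (hn₂ : ∀ x : L₂, x ∈ n₂ ↔ ∀ z ∈ ctr L₂, B₂ x z = 0)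
    (J₂ : L₂ → L₂ →ₗ[ℝ] L₂)
    (hJmap₂ : ∀ z ∈ ctr L₂, ∀ x ∈ n₂, J₂ z x ∈ n₂)
    (hJdef₂ : ∀ z ∈ ctr L₂, ∀ x ∈ n₂, ∀ y ∈ n₂, B₂ (J₂ z x) y = B₂ z ⁅x, y⁆)
    (hJsq₂ : ∀ z ∈ ctr L₂, ∀ x ∈ n₂, J₂ z (J₂ z x) = -(B₂ z z) • x)
    (φ : L₁ ≃ₗ⁅ℝ⁆ L₂)
    (hφ : ∀ x : L₁, x ∈ n₁ ↔ φ x ∈ n₂) :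
    ∃ (ψ : L₁ ≃ₗ⁅ℝ⁆ L₂) (α ε : ℝ), 0 < α ∧ (ε = 1 ∨ ε = -1) ∧
      (∀ x : L₁, x ∈ n₁ ↔ ψ x ∈ n₂) ∧
      (∀ z ∈ ctr L₁, ∀ w ∈ ctr L₁, B₂ (ψ z) (ψ w) = ε * B₁ z w) ∧
      (∀ x ∈ n₁, ψ x = α • (φ x : L₂)) :=
  stmt3_general L₁ B₁ hsymm₁ hnondeg₁ h2stepA₁ h2stepB₁ hctrnd₁ n₁ hn₁ J₁ hJmap₁ hJdef₁ hJsq₁ L₂ B₂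
    hsymm₂ hnondeg₂ h2stepA₂ h2stepB₂ hctrnd₂ n₂ hn₂ J₂ hJmap₂ hJdef₂ hJsq₂ φ hφ
end

section
/- Let n ≥ 1 and let S be a real symmetric n×n matrix with S² = 1ₙ. Define 𝔫 = 𝔫₋₁ ⊕ 𝔫₋₂ with 𝔫₋₁ = ℍⁿ (quaternionic row vectors) and 𝔫₋₂ = Im ℍ (purely imaginary quaternions), with bracket ⁅x,y⁆ = ySx* − xSy* for x, y ∈ 𝔫₋₁ (x* the quaternionic conjugate transpose) and ⁅𝔫₋₁,𝔫₋₂⁆ = ⁅𝔫₋₂,𝔫₋₂⁆ = 0, and symmetric bilinear form ⟨x|y⟩ = 2Re(xSy*) for x, y ∈ 𝔫₋₁, ⟨z|w⟩ = Re(z·conj(w)) for z, w ∈ 𝔫₋₂, and ⟨𝔫₋₁|𝔫₋₂⟩ = 0. Then 𝔫 is a 2-step nilpotent Lie algebra whose center is exactly 𝔫₋₂, ⟨·|·⟩ is non-degenerate, and (𝔫, ⟨·|·⟩) is a pseudo H-type Lie algebra (this is the pseudo Div H-type Lie algebra of the first class 𝔥⁽¹⁾(ℍ,S)). -/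
open scoped Quaternion

noncomputable section

/-- `xSy*` for quaternionic row vectors `x, y` and a real matrix `S`. -/
def qf {n : ℕ} (S : Matrix (Fin n) (Fin n) ℝ) (x y : Fin n → ℍ[ℝ]) : ℍ[ℝ] :=
  ∑ i, ∑ j, S i j • (x i * star (y j))

/-- The bracket of `𝔥⁽¹⁾(ℍ, S)`: `⁅x, y⁆ = ySx* - xSy*` (valued in the second
component); the second components do not contribute. -/
def brq {n : ℕ} (S : Matrix (Fin n) (Fin n) ℝ) (a b : (Fin n → ℍ[ℝ]) × ℍ[ℝ]) :
    (Fin n → ℍ[ℝ]) × ℍ[ℝ] :=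
  (0, qf S b.1 a.1 - qf S a.1 b.1)

/-- The scalar product of `𝔥⁽¹⁾(ℍ, S)`: `2Re(xSy*)` on `𝔫₋₁ = ℍⁿ`,
`Re(z·conj w)` on `𝔫₋₂ = Im ℍ`, the two parts being orthogonal. -/
def Bq {n : ℕ} (S : Matrix (Fin n) (Fin n) ℝ) (a b : (Fin n → ℍ[ℝ]) × ℍ[ℝ]) : ℝ :=
  2 * (qf S a.1 b.1).re + (a.2 * star b.2).re

/-- The carrier `𝔫 = 𝔫₋₁ ⊕ 𝔫₋₂ = ℍⁿ ⊕ Im ℍ`. -/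
def Nq (n : ℕ) : Set ((Fin n → ℍ[ℝ]) × ℍ[ℝ]) := {a | a.2.re = 0}

/-- `𝔫₋₁ = ℍⁿ`. -/
def N1q (n : ℕ) : Set ((Fin n → ℍ[ℝ]) × ℍ[ℝ]) := {a | a.2 = 0}

/-- `𝔫₋₂ = Im ℍ`. -/
def N2q (n : ℕ) : Set ((Fin n → ℍ[ℝ]) × ℍ[ℝ]) := {a | a.1 = 0 ∧ a.2.re = 0}

/-!
Put `q = xSy*`. Symmetry of `S` gives `ySx* = conj q`, so the bracket `conj q - q` is purely
imaginary, and it only sees the `ℍⁿ` components, whence two-step nilpotency. Since `S² = 1`,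
pairing `x` with `Sx` gives `xS(Sx)* = ∑ |xᵢ|²`: this makes the form non-degenerate, and
bracketing `x` with `e·Sx` for an imaginary unit `e` gives `2 ∑ |xᵢ|² e`, so only `x = 0` is
central. Left multiplication `J_z x = z x` is dual to the bracket, and `z² = -|z|²` for
imaginary `z` is the Clifford condition.
-/

open Quaternion

section SesquilinearForm

variable {n : ℕ} (S : Matrix (Fin n) (Fin n) ℝ)

def mulVecR (x : Fin n → ℍ[ℝ]) : Fin n → ℍ[ℝ] := fun j => ∑ k, S j k • x k

lemma mulVecR_mulVecR (T : Matrix (Fin n) (Fin n) ℝ) (x : Fin n → ℍ[ℝ]) :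
    mulVecR S (mulVecR T x) = mulVecR (S * T) x := by
  funext j
  simp only [mulVecR, Matrix.mul_apply, Finset.smul_sum, smul_smul, Finset.sum_smul]
  exact Finset.sum_comm

lemma mulVecR_one (x : Fin n → ℍ[ℝ]) : mulVecR 1 x = x := by
  funext j
  simp [mulVecR, Matrix.one_apply, ite_smul]

lemma qf_eq_sum_mul_star_mulVecR (x y : Fin n → ℍ[ℝ]) :
    qf S x y = ∑ i, x i * star (mulVecR S y i) := by
  simp only [qf, mulVecR, star_sum, Finset.mul_sum, Quaternion.star_smul, mul_smul_comm]

lemma qf_add_left (x x' y : Fin n → ℍ[ℝ]) : qf S (x + x') y = qf S x y + qf S x' y := by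
  simp [qf, add_mul, smul_add, Finset.sum_add_distrib]

lemma qf_add_right (x y y' : Fin n → ℍ[ℝ]) : qf S x (y + y') = qf S x y + qf S x y' := by
  simp [qf, mul_add, smul_add, Finset.sum_add_distrib]

lemma qf_smul_left (c : ℝ) (x y : Fin n → ℍ[ℝ]) : qf S (c • x) y = c • qf S x y := by
  simp [qf, Finset.smul_sum, smul_comm c]

lemma qf_smul_right (c : ℝ) (x y : Fin n → ℍ[ℝ]) : qf S x (c • y) = c • qf S x y := by
  simp [qf, Finset.smul_sum, smul_comm c]

@[simp] lemma qf_zero_left (y : Fin n → ℍ[ℝ]) : qf S 0 y = 0 := by simp [qf]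

@[simp] lemma qf_zero_right (x : Fin n → ℍ[ℝ]) : qf S x 0 = 0 := by simp [qf]

lemma qf_mul_left (c : ℍ[ℝ]) (x y : Fin n → ℍ[ℝ]) :
    qf S (fun i => c * x i) y = c * qf S x y := by
  simp [qf, Finset.mul_sum, mul_assoc]

lemma qf_mul_right (c : ℍ[ℝ]) (x y : Fin n → ℍ[ℝ]) :
    qf S x (fun j => c * y j) = qf S x y * star c := by
  simp [qf, Finset.sum_mul, star_mul, mul_assoc]

lemma star_qf (hS : S.transpose = S) (x y : Fin n → ℍ[ℝ]) : star (qf S x y) = qf S y x := by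
  rw [qf, star_sum, qf, Finset.sum_comm]
  refine Finset.sum_congr rfl fun j _ => ?_
  rw [star_sum]
  refine Finset.sum_congr rfl fun i _ => ?_
  rw [Quaternion.star_smul, star_mul, star_star, ← Matrix.transpose_apply S i j, hS]

lemma qf_mulVecR_self (hS2 : S * S = 1) (x : Fin n → ℍ[ℝ]) :
    qf S x (mulVecR S x) = ((∑ i, normSq (x i) : ℝ) : ℍ[ℝ]) := by
  simp only [qf_eq_sum_mul_star_mulVecR, mulVecR_mulVecR, hS2, mulVecR_one, self_mul_star]
  exact (map_sum (algebraMap ℝ ℍ[ℝ]) _ _).symm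

end SesquilinearForm

lemma sum_normSq_eq_zero_iff {ι : Type*} [Fintype ι] {x : ι → ℍ[ℝ]} :
    ∑ i, normSq (x i) = 0 ↔ x = 0 := by
  rw [Finset.sum_eq_zero_iff_of_nonneg fun i _ => normSq_nonneg, funext_iff]
  simp

section Bracket

variable {n : ℕ} (S : Matrix (Fin n) (Fin n) ℝ)

lemma re_brq_snd (hS : S.transpose = S) (a b : (Fin n → ℍ[ℝ]) × ℍ[ℝ]) :
    (brq S a b).2.re = 0 := by
  simp [brq, ← star_qf S hS a.1 b.1]

lemma brq_add_left (a a' b : (Fin n → ℍ[ℝ]) × ℍ[ℝ]) :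
    brq S (a + a') b = brq S a b + brq S a' b := by
  simp only [brq, Prod.fst_add, qf_add_left, qf_add_right, Prod.mk_add_mk, add_zero]
  congr 1
  abel

lemma brq_smul_left (c : ℝ) (a b : (Fin n → ℍ[ℝ]) × ℍ[ℝ]) :
    brq S (c • a) b = c • brq S a b := by
  simp [brq, qf_smul_left, qf_smul_right, smul_sub]

lemma brq_anticomm (a b : (Fin n → ℍ[ℝ]) × ℍ[ℝ]) : brq S a b = -brq S b a := by
  simp [brq]

lemma brq_eq_zero_of_fst_left {a : (Fin n → ℍ[ℝ]) × ℍ[ℝ]} (ha : a.1 = 0)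
    (b : (Fin n → ℍ[ℝ]) × ℍ[ℝ]) : brq S a b = 0 := by
  simp [brq, ha]

lemma brq_eq_zero_of_fst_right (a : (Fin n → ℍ[ℝ]) × ℍ[ℝ]) {b : (Fin n → ℍ[ℝ]) × ℍ[ℝ]}
    (hb : b.1 = 0) : brq S a b = 0 := by
  simp [brq, hb]

lemma brq_mul_mulVecR (hS : S.transpose = S) (hS2 : S * S = 1) {c : ℍ[ℝ]} (hc : c.re = 0)
    (a : (Fin n → ℍ[ℝ]) × ℍ[ℝ]) (w : ℍ[ℝ]) :
    brq S a (fun j => c * mulVecR S a.1 j, w) = (0, (2 * ∑ i, normSq (a.1 i)) • c) := by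
  have hc' : star c = -c := star_eq_neg.2 hc
  rw [brq, qf_mul_left, qf_mul_right, ← star_qf S hS a.1, qf_mulVecR_self S hS2, star_coe, hc',
    mul_coe_eq_smul, mul_neg, coe_mul_eq_smul, sub_neg_eq_add, ← add_smul, two_mul]

lemma fst_eq_zero_of_forall_brq_eq_zero (hS : S.transpose = S) (hS2 : S * S = 1)
    {a : (Fin n → ℍ[ℝ]) × ℍ[ℝ]} (h : ∀ b ∈ Nq n, brq S a b = 0) : a.1 = 0 := by
  let e : ℍ[ℝ] := ⟨0, 1, 0, 0⟩
  have he : e ≠ 0 := fun he0 => by simpa [e] using congrArg QuaternionAlgebra.imI he0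
  have hbr := h (fun j => e * mulVecR S a.1 j, 0) (show (0 : ℍ[ℝ]).re = 0 from rfl)
  rw [brq_mul_mulVecR S hS hS2 (show e.re = 0 from rfl), Prod.mk_eq_zero, smul_eq_zero] at hbr
  have hsum : ∑ i, normSq (a.1 i) = 0 := by
    simpa [he] using hbr.2
  exact sum_normSq_eq_zero_iff.1 hsum

end Bracket

section Form

variable {n : ℕ} (S : Matrix (Fin n) (Fin n) ℝ)

lemma Bq_comm (hS : S.transpose = S) (a b : (Fin n → ℍ[ℝ]) × ℍ[ℝ]) : Bq S a b = Bq S b a := by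
  rw [Bq, Bq, ← star_qf S hS, re_star, ← re_star (a.2 * star b.2), star_mul, star_star]

@[simp] lemma Bq_zero_fst_right (a : (Fin n → ℍ[ℝ]) × ℍ[ℝ]) (w : ℍ[ℝ]) :
    Bq S a (0, w) = (a.2 * star w).re := by
  simp [Bq]

@[simp] lemma Bq_zero_snd_right (a : (Fin n → ℍ[ℝ]) × ℍ[ℝ]) (y : Fin n → ℍ[ℝ]) :
    Bq S a (y, 0) = 2 * (qf S a.1 y).re := by
  simp [Bq]

lemma Bq_self_of_fst_eq_zero {z : (Fin n → ℍ[ℝ]) × ℍ[ℝ]} (hz : z.1 = 0) :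
    Bq S z z = normSq z.2 := by
  simp [Bq, hz, self_mul_star]

lemma eq_zero_of_forall_Bq_eq_zero (hS2 : S * S = 1) {a : (Fin n → ℍ[ℝ]) × ℍ[ℝ]}
    (ha : a ∈ Nq n) (h : ∀ b ∈ Nq n, Bq S a b = 0) : a = 0 := by
  have h1 := h (mulVecR S a.1, 0) (show (0 : ℍ[ℝ]).re = 0 from rfl)
  have h2 := h (0, a.2) ha
  simp only [Bq_zero_snd_right, qf_mulVecR_self S hS2, re_coe, mul_eq_zero, two_ne_zero,
    false_or, sum_normSq_eq_zero_iff] at h1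
  rw [Bq_zero_fst_right, self_mul_star, re_coe, normSq_eq_zero] at h2
  exact Prod.ext h1 h2

lemma mem_N1q_iff_forall_Bq_eq_zero {a : (Fin n → ℍ[ℝ]) × ℍ[ℝ]} (ha : a ∈ Nq n) :
    a ∈ N1q n ↔ ∀ z ∈ N2q n, Bq S a z = 0 := by
  constructor
  · rintro (ha2 : a.2 = 0) z ⟨hz1, -⟩
    simp [Bq, ha2, hz1]
  · intro h
    have h2 := h (0, a.2) ⟨rfl, ha⟩
    rwa [Bq_zero_fst_right, self_mul_star, re_coe, normSq_eq_zero] at h2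

end Form

section CliffordMaps

variable {n : ℕ} (S : Matrix (Fin n) (Fin n) ℝ)

def Jq (z a : (Fin n → ℍ[ℝ]) × ℍ[ℝ]) : (Fin n → ℍ[ℝ]) × ℍ[ℝ] := (fun i => z.2 * a.1 i, 0)

lemma Bq_Jq (hS : S.transpose = S) {z : (Fin n → ℍ[ℝ]) × ℍ[ℝ]} (hz : z.2.re = 0)
    (x y : (Fin n → ℍ[ℝ]) × ℍ[ℝ]) : Bq S (Jq z x) y = Bq S z (brq S x y) := by
  rw [brq, ← star_qf S hS x.1, Bq_zero_fst_right, Jq, Bq, qf_mul_left]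
  simp only [star_sub, star_star, zero_mul, re_zero, add_zero, mul_sub, re_sub, re_mul, re_star,
    imI_star, imJ_star, imK_star, hz]
  ring

lemma Jq_Jq {z x : (Fin n → ℍ[ℝ]) × ℍ[ℝ]} (hz : z ∈ N2q n) (hx : x ∈ N1q n) :
    Jq z (Jq z x) = (-Bq S z z) • x := by
  obtain ⟨hz1, hz2⟩ := hz
  have hx2 : x.2 = 0 := hx
  refine Prod.ext (funext fun i => ?_) (by simp [Jq, hx2])
  change z.2 * (z.2 * x.1 i) = (-Bq S z z) • x.1 i
  rw [← mul_assoc, ← sq, sq_eq_neg_normSq.2 hz2, Bq_self_of_fst_eq_zero S hz1, neg_mul,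
    coe_mul_eq_smul, neg_smul]

end CliffordMaps

/-- `𝔥⁽¹⁾(ℍ, S)` is a pseudo H-type Lie algebra: the bracket is
bilinear, alternating, valued in `Im ℍ`, two-step nilpotent with center exactly
`𝔫₋₂ = Im ℍ`; the scalar product is symmetric and non-degenerate on `𝔫` and on the
center, `𝔫₋₁` is the orthogonal complement of the center, and the maps `J_z`
defined by duality satisfy the Clifford condition. -/
theorem stmt5 (n : ℕ) (hn : 1 ≤ n) (S : Matrix (Fin n) (Fin n) ℝ)
    (hSsymm : S.transpose = S) (hS2 : S * S = 1) :
    -- the bracket takes values in 𝔫₋₂ = Im ℍ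
    (∀ a b, brq S a b ∈ N2q n) ∧
    -- the bracket is ℝ-bilinear and antisymmetric
    (∀ a a' b, brq S (a + a') b = brq S a b + brq S a' b) ∧
    (∀ (c : ℝ) (a b), brq S (c • a) b = c • brq S a b) ∧
    (∀ a b, brq S a b = -brq S b a) ∧
    -- 𝔫 is 2-step nilpotent: ⁅𝔫,𝔫⁆ ≠ 0 and ⁅𝔫,⁅𝔫,𝔫⁆⁆ = 0 (hence Jacobi holds)
    (∃ a ∈ Nq n, ∃ b ∈ Nq n, brq S a b ≠ 0) ∧
    (∀ a b c, brq S a (brq S b c) = 0) ∧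
    -- the center of 𝔫 is exactly 𝔫₋₂
    (∀ a ∈ Nq n, ((∀ b ∈ Nq n, brq S a b = 0) ↔ a ∈ N2q n)) ∧
    -- the scalar product is symmetric and non-degenerate on 𝔫
    (∀ a ∈ Nq n, ∀ b ∈ Nq n, Bq S a b = Bq S b a) ∧
    (∀ a ∈ Nq n, (∀ b ∈ Nq n, Bq S a b = 0) → a = 0) ∧
    -- its restriction to the center is non-degenerate
    (∀ z ∈ N2q n, (∀ w ∈ N2q n, Bq S z w = 0) → z = 0) ∧
    -- 𝔫₋₁ is the orthogonal complement of the center in 𝔫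
    (∀ a ∈ Nq n, (a ∈ N1q n ↔ ∀ z ∈ N2q n, Bq S a z = 0)) ∧
    -- pseudo H-type: the maps J_z satisfy the Clifford condition
    (∃ J : ((Fin n → ℍ[ℝ]) × ℍ[ℝ]) → ((Fin n → ℍ[ℝ]) × ℍ[ℝ]) →
        ((Fin n → ℍ[ℝ]) × ℍ[ℝ]),
      ∀ z ∈ N2q n, ∀ x ∈ N1q n,
        J z x ∈ N1q n ∧
        (∀ y ∈ N1q n, Bq S (J z x) y = Bq S z (brq S x y)) ∧
        J z (J z x) = (-(Bq S z z)) • x) := by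
  refine ⟨fun a b => ⟨rfl, re_brq_snd S hSsymm a b⟩, brq_add_left S, brq_smul_left S,
    brq_anticomm S, ?bracket_ne_zero, fun a _ _ => brq_eq_zero_of_fst_right S a rfl, ?center,
    fun a _ b _ => Bq_comm S hSsymm a b, fun _ ha => eq_zero_of_forall_Bq_eq_zero S hS2 ha,
    ?center_nondegenerate, fun _ => mem_N1q_iff_forall_Bq_eq_zero S,
    ⟨Jq, fun z hz x hx => ⟨rfl, fun y _ => Bq_Jq S hSsymm hz.2 x y, Jq_Jq S hz hx⟩⟩⟩
  case bracket_ne_zero =>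
    by_contra! h
    have hone := fst_eq_zero_of_forall_brq_eq_zero S hSsymm hS2 (h (fun _ => 1, 0) rfl)
    exact one_ne_zero (congrFun hone ⟨0, hn⟩)
  case center =>
    exact fun a ha => ⟨fun h => ⟨fst_eq_zero_of_forall_brq_eq_zero S hSsymm hS2 h, ha⟩,
      fun h b _ => brq_eq_zero_of_fst_left S h.1 b⟩
  case center_nondegenerate =>
    intro z hz h
    have hnorm := h z hz
    rw [Bq_self_of_fst_eq_zero S hz.1, normSq_eq_zero] at hnorm
    exact Prod.ext hz.1 hnorm
end
end

section
/- Let S be a real symmetric n×n matrix with S² = 1ₙ and signature (r,s), and let P be a real orthogonal n×n matrix with P·S·Pᵀ = 1_{r,s}, where 1_{r,s} = diag(1_r, −1_s). Define the linear map φ from 𝔥⁽¹⁾(ℍ, 1_{r,s}) to 𝔥⁽¹⁾(ℍ, S) by φ(x) = xP for x ∈ ℍⁿ and φ(z) = z for z ∈ Im ℍ. Then φ is a bijective Lie algebra homomorphism that preserves the scalar products (⟨φ(u)|φ(v)⟩_S = ⟨u|v⟩_{1_{r,s}} for all u, v); hence 𝔥⁽¹⁾(ℍ, S) is isomorphic to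 𝔥⁽¹⁾(ℍ, 1_{r,s}) as a pseudo H-type Lie algebra. -/
open scoped Quaternion

noncomputable section

/-- The matrix `1_{r,s} = diag(1_r, -1_s)`. -/
def diagRS (n r : ℕ) : Matrix (Fin n) (Fin n) ℝ :=
  Matrix.diagonal fun i => if (i : ℕ) < r then 1 else -1

abbrev rowq {n : ℕ} (x : Fin n → ℍ[ℝ]) : Matrix (Fin 1) (Fin n) ℍ[ℝ] :=
  Matrix.of fun _ j => x j

abbrev mq {n : ℕ} (S : Matrix (Fin n) (Fin n) ℝ) : Matrix (Fin n) (Fin n) ℍ[ℝ] :=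
  S.map (algebraMap ℝ ℍ[ℝ])

lemma rowq_inj {n : ℕ} {x y : Fin n → ℍ[ℝ]} (h : rowq x = rowq y) : x = y :=
  funext fun j => congrFun (congrFun h 0) j

lemma mq_mul {n : ℕ} (Q R : Matrix (Fin n) (Fin n) ℝ) : mq (Q * R) = mq Q * mq R := by
  show (Q * R).map (algebraMap ℝ ℍ[ℝ]) = _
  rw [Matrix.map_mul]

lemma mq_one {n : ℕ} : mq (1 : Matrix (Fin n) (Fin n) ℝ) = 1 :=
  Matrix.map_one _ (map_zero _) (map_one _)

lemma qf_eq {n : ℕ} (S : Matrix (Fin n) (Fin n) ℝ) (x y : Fin n → ℍ[ℝ]) :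
    qf S x y = (rowq x * mq S * (rowq y).conjTranspose) 0 0 := by
  simp only [qf, Matrix.mul_apply, Matrix.conjTranspose_apply, Matrix.map_apply,
    Matrix.of_apply, Finset.sum_mul]
  rw [Finset.sum_comm]
  refine Finset.sum_congr rfl fun j _ => Finset.sum_congr rfl fun i _ => ?_
  rw [Algebra.smul_def, ← Algebra.commutes (S i j) (x i), mul_assoc]

lemma rowq_mul {n : ℕ} (P : Matrix (Fin n) (Fin n) ℝ) (x : Fin n → ℍ[ℝ]) :
    rowq (fun j => ∑ i, P i j • x i) = rowq x * mq P := by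
  refine Matrix.ext fun _ j => ?_
  simp only [Matrix.mul_apply, Matrix.map_apply, Matrix.of_apply]
  exact Finset.sum_congr rfl fun i _ => by rw [Algebra.smul_def, ← Algebra.commutes]

lemma mq_ct {n : ℕ} (P : Matrix (Fin n) (Fin n) ℝ) :
    (mq P).conjTranspose = mq P.transpose := by
  refine Matrix.ext fun i j => ?_
  simp only [Matrix.conjTranspose_apply, Matrix.map_apply, Matrix.transpose_apply]
  simp [Quaternion.star_coe]

lemma qf_map {n : ℕ} (S P : Matrix (Fin n) (Fin n) ℝ) (x y : Fin n → ℍ[ℝ]) :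
    qf S (fun j => ∑ i, P i j • x i) (fun j => ∑ i, P i j • y i)
      = qf (P * S * P.transpose) x y := by
  rw [qf_eq, qf_eq, rowq_mul, rowq_mul, Matrix.conjTranspose_mul, mq_ct]
  rw [mq_mul, mq_mul]
  simp only [Matrix.mul_assoc]

/-- Lemma 3.1(1), 𝔽 = ℍ: if P is orthogonal with
P·S·Pᵀ = 1_{r,s}, then φ(x) = xP, φ(z) = z is an isomorphism of pseudo
H-type Lie algebras from 𝔥⁽¹⁾(ℍ, 1_{r,s}) onto 𝔥⁽¹⁾(ℍ, S). -/
theorem stmt6 (n r s : ℕ) (hrs : r + s = n)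
    (S P : Matrix (Fin n) (Fin n) ℝ)
    (hSsymm : S.transpose = S) (hS2 : S * S = 1)
    (hP : P * P.transpose = 1)
    (hPS : P * S * P.transpose = diagRS n r)
    (φ : ((Fin n → ℍ[ℝ]) × ℍ[ℝ]) → ((Fin n → ℍ[ℝ]) × ℍ[ℝ]))
    (hφ : ∀ a, φ a = (fun j => ∑ i, P i j • a.1 i, a.2)) :
    IsLinearMap ℝ φ ∧
    Function.Bijective φ ∧
    (∀ a b, φ (brq (diagRS n r) a b) = brq S (φ a) (φ b)) ∧
    (∀ a b, Bq S (φ a) (φ b) = Bq (diagRS n r) a b) := by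
  have hqf : ∀ x y : Fin n → ℍ[ℝ],
      qf S (fun j => ∑ i, P i j • x i) (fun j => ∑ i, P i j • y i) = qf (diagRS n r) x y := by
    intro x y; rw [qf_map, hPS]
  have hPtP : P.transpose * P = 1 := mul_eq_one_comm.mp hP
  refine ⟨?_, ?_, ?_, ?_⟩
  · constructor
    · intro a b
      rw [hφ, hφ, hφ]
      refine Prod.ext ?_ rfl
      funext j
      simp [smul_add, Finset.sum_add_distrib]
    · intro c a
      rw [hφ, hφ]
      refine Prod.ext ?_ rfl
      funext j
      simp [Finset.smul_sum, smul_smul, mul_comm]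
  · set ψ : ((Fin n → ℍ[ℝ]) × ℍ[ℝ]) → ((Fin n → ℍ[ℝ]) × ℍ[ℝ]) :=
      fun a => (fun j => ∑ i, P.transpose i j • a.1 i, a.2) with hψ
    have hl : Function.LeftInverse ψ φ := by
      intro a
      rw [hφ]
      refine Prod.ext ?_ rfl
      refine rowq_inj ?_
      show rowq (fun j => ∑ i, P.transpose i j • _) = _
      rw [rowq_mul, rowq_mul, Matrix.mul_assoc, ← mq_mul, hP, mq_one, Matrix.mul_one]
    have hr : Function.RightInverse ψ φ := by
      intro a
      rw [hφ]
      refine Prod.ext ?_ rfl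
      refine rowq_inj ?_
      show rowq (fun j => ∑ i, P i j • _) = _
      rw [rowq_mul]
      show (rowq fun j => ∑ i, P.transpose i j • a.1 i) * mq P = _
      rw [rowq_mul, Matrix.mul_assoc, ← mq_mul, hPtP, mq_one, Matrix.mul_one]
    exact ⟨hl.injective, hr.surjective⟩
  · intro a b
    rw [hφ a, hφ b, hφ (brq (diagRS n r) a b)]
    refine Prod.ext ?_ ?_
    · funext j
      simp [brq]
    · show (brq (diagRS n r) a b).2 = _
      simp only [brq]
      rw [← hqf b.1 a.1, ← hqf a.1 b.1]
  · intro a b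
    rw [hφ a, hφ b]
    simp only [Bq]
    rw [hqf a.1 b.1]
end
end

section
/- Let r, s ≥ 0 with n = r + s ≥ 1, and let K_n be the n×n real matrix with (i,j)-entry δ_{i,n+1−j}. Define the linear map ψ from 𝔥⁽¹⁾(ℍ, 1_{r,s}) to 𝔥⁽¹⁾(ℍ, 1_{s,r}) by ψ(x) = x·K_n for x ∈ ℍⁿ and ψ(z) = −z for z ∈ Im ℍ. Then ψ is a bijective Lie algebra homomorphism; moreover ψ restricted to Im ℍ is an isometry (⟨ψ(z)|ψ(w)⟩ = ⟨z|w⟩) and ψ restricted to ℍⁿ is an anti-isometry (⟨ψ(x)|ψ(y)⟩_{1_{s,r}} = −⟨x|y⟩_{1_{r,s}}). Hence 𝔥⁽¹⁾(ℍ, 1_{r,s}) is equivalent to 𝔥⁽¹⁾(ℍ, 1_{s,r}). -/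
open scoped Quaternion

noncomputable section

/-- The reversal matrix K_n with (i,j)-entry δ_{i, n+1-j} (1-indexed). -/
def Kq (n : ℕ) : Matrix (Fin n) (Fin n) ℝ :=
  fun i j => if (i : ℕ) + (j : ℕ) + 1 = n then 1 else 0

lemma Kq_apply_rev {n : ℕ} (x : Fin n → ℍ[ℝ]) (j : Fin n) :
    ∑ i, Kq n i j • x i = x j.rev := by
  rw [Finset.sum_eq_single j.rev]
  · have hc : (j.rev : ℕ) + (j : ℕ) + 1 = n := by
      have := j.isLt; rw [Fin.val_rev]; omega
    show (if _ then (1:ℝ) else 0) • x j.rev = x j.rev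
    rw [if_pos hc]; simp
  · intro i _ hi
    have hc : ¬ ((i : ℕ) + (j : ℕ) + 1 = n) := by
      intro h
      apply hi
      apply Fin.ext
      have := j.isLt; rw [Fin.val_rev]; omega
    show (if _ then (1:ℝ) else 0) • x i = 0
    rw [if_neg hc]; simp
  · simp

lemma qf_diag {n : ℕ} (d : Fin n → ℝ) (x y : Fin n → ℍ[ℝ]) :
    qf (Matrix.diagonal d) x y = ∑ i, d i • (x i * star (y i)) := by
  unfold qf
  refine Finset.sum_congr rfl fun i _ => ?_
  rw [Finset.sum_eq_single i]
  · simp [Matrix.diagonal_apply_eq]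
  · intro j _ hj; simp [Matrix.diagonal_apply_ne' _ hj]
  · simp

lemma qf_rev {n r s : ℕ} (hrs : r + s = n) (x y : Fin n → ℍ[ℝ]) :
    qf (diagRS n s) (fun j => x j.rev) (fun j => y j.rev)
      = - qf (diagRS n r) x y := by
  unfold diagRS
  rw [qf_diag, qf_diag]
  rw [← Equiv.sum_comp (Fin.revPerm) (fun i => (if (i : ℕ) < s then (1:ℝ) else -1) • (x i.rev * star (y i.rev)))]
  rw [← Finset.sum_neg_distrib]
  refine Finset.sum_congr rfl fun i _ => ?_
  have hlt := i.isLt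
  simp only [Fin.revPerm_apply, Fin.rev_rev]
  have hval : (i.rev : ℕ) = n - ((i : ℕ) + 1) := Fin.val_rev i
  have : (if ((i.rev : ℕ)) < s then (1:ℝ) else -1) = -(if (i : ℕ) < r then (1:ℝ) else -1) := by
    rw [hval]; split_ifs with h1 h2 h2 <;> first | (exfalso; omega) | norm_num
  rw [this, neg_smul]

/-- Lemma 3.1(2), 𝔽 = ℍ: the map ψ(x) = x·K_n, ψ(z) = -z is a
GLA isomorphism of 𝔥⁽¹⁾(ℍ, 1_{r,s}) onto 𝔥⁽¹⁾(ℍ, 1_{s,r}) that is an isometry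
on 𝔫₋₂ = Im ℍ and an anti-isometry on 𝔫₋₁ = ℍⁿ; hence 𝔥⁽¹⁾(ℍ, 1_{r,s}) is
equivalent to 𝔥⁽¹⁾(ℍ, 1_{s,r}). -/
theorem stmt7 (n r s : ℕ) (hn : 1 ≤ n) (hrs : r + s = n)
    (ψ : ((Fin n → ℍ[ℝ]) × ℍ[ℝ]) → ((Fin n → ℍ[ℝ]) × ℍ[ℝ]))
    (hψ : ∀ a, ψ a = (fun j => ∑ i, Kq n i j • a.1 i, -a.2)) :
    IsLinearMap ℝ ψ ∧
    Function.Bijective ψ ∧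
    (∀ a b, ψ (brq (diagRS n r) a b) = brq (diagRS n s) (ψ a) (ψ b)) ∧
    (∀ a ∈ N2q n, ∀ b ∈ N2q n, Bq (diagRS n s) (ψ a) (ψ b) = Bq (diagRS n r) a b) ∧
    (∀ a ∈ N1q n, ∀ b ∈ N1q n, Bq (diagRS n s) (ψ a) (ψ b) = -(Bq (diagRS n r) a b)) := by
  have hψ' : ∀ a, ψ a = (fun j => a.1 j.rev, -a.2) := by
    intro a
    rw [hψ a]
    exact Prod.ext (funext fun j => Kq_apply_rev a.1 j) rfl
  refine ⟨?_, ?_, ?_, ?_, ?_⟩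
  · constructor
    · intro a b
      simp only [hψ', Prod.fst_add, Prod.snd_add, Pi.add_apply, neg_add, Prod.mk_add_mk]
      rfl
    · intro c a
      simp only [hψ', Prod.smul_fst, Prod.smul_snd, Pi.smul_apply, smul_neg, Prod.smul_mk]
      rfl
  · have hinv : Function.Involutive ψ := by
      intro a
      simp [hψ', Fin.rev_rev]
    exact hinv.bijective
  · intro a b
    have h1 : qf (diagRS n s) (fun j => b.1 j.rev) (fun j => a.1 j.rev)
        = - qf (diagRS n r) b.1 a.1 := qf_rev hrs b.1 a.1
    have h2 : qf (diagRS n s) (fun j => a.1 j.rev) (fun j => b.1 j.rev)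
        = - qf (diagRS n r) a.1 b.1 := qf_rev hrs a.1 b.1
    refine Prod.ext ?_ ?_
    · rw [hψ']; funext j; simp [brq]
    · simp only [hψ', brq, h1, h2]; abel
  · intro a ha b hb
    obtain ⟨ha1, _⟩ := ha
    obtain ⟨hb1, _⟩ := hb
    simp [Bq, hψ', ha1, hb1, qf_diag, diagRS]
  · intro a ha b hb
    have ha2 : a.2 = 0 := ha
    have hb2 : b.2 = 0 := hb
    have h2 : qf (diagRS n s) (fun j => a.1 j.rev) (fun j => b.1 j.rev)
        = - qf (diagRS n r) a.1 b.1 := qf_rev hrs a.1 b.1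
    simp [Bq, hψ', ha2, hb2, h2]
end
end

section
/- Let n ≥ 1, let S be a real symmetric n×n matrix with S² = 1ₙ, and let γ ∈ {1, −1}. Define the real Lie algebra 𝔪 = 𝔤₋₁ ⊕ 𝔤₋₂ with 𝔤₋₁ = ℂⁿ × ℂⁿ and 𝔤₋₂ = ℂ, bracket ⁅(x,a),(y,b)⁆ = Σᵢ aᵢyᵢ − Σᵢ bᵢxᵢ ∈ 𝔤₋₂ and 𝔤₋₂ central, and real symmetric bilinear form ⟨(x,a)|(y,b)⟩ = Re(Σ_{i,j} xᵢ S_{ij} conj(yⱼ)) − γ·Re(Σ_{i,j} aᵢ S_{ij} conj(bⱼ)) on 𝔤₋₁, ⟨z|w⟩ = −γ·Re(z·conj(w)) on 𤭋₂ = ℂ, and ⟨𝔤₋₁|𝔤₋₂⟩ = 0. Then (𝔪, ⟨·|·⟩) is a pseudo H-type Lie algebra whose center is exactly 𝔤₋₂, and the restriction of ⟨·|·⟩ to 𝔤₋₂ has signature (2,0) if γ = −1 and (0,2) if γ = 1. -/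
noncomputable section

/-- `xS(conj y)ᵗ` for complex row vectors `x, y` and a real matrix `S`. -/
def qc {n : ℕ} (S : Matrix (Fin n) (Fin n) ℝ) (x y : Fin n → ℂ) : ℂ :=
  ∑ i, ∑ j, S i j • (x i * star (y j))

/-- The bracket of the negative part `𝔪 = 𝔤₋₁ ⊕ 𝔤₋₂`, with
`𝔤₋₁ = ℂⁿ × ℂⁿ`, `𝔤₋₂ = ℂ`: `⁅(x,a),(y,b)⁆ = Σᵢ aᵢyᵢ - Σᵢ bᵢxᵢ ∈ 𝔤₋₂`,
and `𝔤₋₂` is central. -/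
def brc {n : ℕ} (a b : (Fin n → ℂ) × (Fin n → ℂ) × ℂ) :
    (Fin n → ℂ) × (Fin n → ℂ) × ℂ :=
  (0, 0, (∑ i, a.2.1 i * b.1 i) - ∑ i, b.2.1 i * a.1 i)

/-- The scalar product:
`⟨(x,a)|(y,b)⟩ = Re(Σ xᵢ Sᵢⱼ conj(yⱼ)) - γ Re(Σ aᵢ Sᵢⱼ conj(bⱼ))` on `𝔤₋₁`,
`⟨z|w⟩ = -γ Re(z·conj w)` on `𝔤₋₂ = ℂ`, and `⟨𝔤₋₁|𝔤₋₂⟩ = 0`. -/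
def Bc {n : ℕ} (S : Matrix (Fin n) (Fin n) ℝ) (γ : ℝ)
    (a b : (Fin n → ℂ) × (Fin n → ℂ) × ℂ) : ℝ :=
  (qc S a.1 b.1).re - γ * (qc S a.2.1 b.2.1).re - γ * (a.2.2 * star b.2.2).re

/-- `𝔤₋₁ = ℂⁿ × ℂⁿ`. -/
def N1c (n : ℕ) : Set ((Fin n → ℂ) × (Fin n → ℂ) × ℂ) := {a | a.2.2 = 0}

/-- `𝔤₋₂ = ℂ`. -/
def N2c (n : ℕ) : Set ((Fin n → ℂ) × (Fin n → ℂ) × ℂ) := {a | a.1 = 0 ∧ a.2.1 = 0}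

-- ### auxiliary lemmas

lemma contract_aux {n : ℕ} (S : Matrix (Fin n) (Fin n) ℝ)
    (hSsymm : S.transpose = S) (hS2 : S * S = 1) (x : Fin n → ℂ) (j : Fin n) :
    ∑ i, (S i j : ℂ) * ∑ k, (S i k : ℂ) * x k = x j := by
  have hsym : ∀ a b, S a b = S b a := by
    intro a b; conv_lhs => rw [← hSsymm, Matrix.transpose_apply]
  have h : ∀ a b : Fin n, ((S * S) a b : ℂ) = ((1 : Matrix (Fin n) (Fin n) ℝ) a b : ℂ) := by
    rw [hS2]; intro a b; rfl
  simp_rw [Finset.mul_sum]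
  rw [Finset.sum_comm]
  have key : ∀ k, ∑ i, (S i j : ℂ) * ((S i k : ℂ) * x k) = ((S * S) j k : ℂ) * x k := by
    intro k
    rw [Matrix.mul_apply]
    push_cast
    rw [Finset.sum_mul]
    congr 1; ext i
    rw [hsym i j]; ring
  simp_rw [key, h]
  simp_rw [Matrix.one_apply, apply_ite (fun r : ℝ => (r : ℂ)), ite_mul,
    Complex.ofReal_one, Complex.ofReal_zero, one_mul, zero_mul]
  simp [Finset.sum_ite_eq]

lemma contract_aux' {n : ℕ} (S : Matrix (Fin n) (Fin n) ℝ)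
    (hSsymm : S.transpose = S) (hS2 : S * S = 1) (x : Fin n → ℂ) (i : Fin n) :
    ∑ j, (S i j : ℂ) * ∑ k, (S j k : ℂ) * x k = x i := by
  have hsym : ∀ a b, S a b = S b a := by
    intro a b; conv_lhs => rw [← hSsymm, Matrix.transpose_apply]
  rw [← contract_aux S hSsymm hS2 x i]
  exact Finset.sum_congr rfl fun j _ => by rw [hsym i j]

lemma qc_special {n : ℕ} (S : Matrix (Fin n) (Fin n) ℝ)
    (hSsymm : S.transpose = S) (hS2 : S * S = 1) (c : ℂ) (a y : Fin n → ℂ) :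
    qc S (fun i => c * ∑ j, (S i j : ℂ) * star (a j)) y
      = c * ∑ j, star (a j) * star (y j) := by
  unfold qc
  simp_rw [Complex.real_smul]
  rw [Finset.sum_comm]
  have key : ∀ j, ∑ i, ((S i j : ℂ)) * ((c * ∑ k, (S i k : ℂ) * star (a k)) * star (y j))
      = c * (star (a j) * star (y j)) := by
    intro j
    have hco := contract_aux S hSsymm hS2 (fun k => star (a k)) j
    calc ∑ i, ((S i j : ℂ)) * ((c * ∑ k, (S i k : ℂ) * star (a k)) * star (y j))
        = (c * star (y j)) * ∑ i, (S i j : ℂ) * ∑ k, (S i k : ℂ) * star (a k) := by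
          rw [Finset.mul_sum]; congr 1; ext i; ring
      _ = c * (star (a j) * star (y j)) := by rw [hco]; ring
  simp_rw [key, ← Finset.mul_sum]

lemma qc_nondeg {n : ℕ} (S : Matrix (Fin n) (Fin n) ℝ)
    (hSsymm : S.transpose = S) (hS2 : S * S = 1) (x : Fin n → ℂ)
    (h : (qc S x (fun j => ∑ i, (S i j : ℂ) * x i)).re = 0) : x = 0 := by
  have hsym : ∀ a b, S a b = S b a := by
    intro a b; conv_lhs => rw [← hSsymm, Matrix.transpose_apply]
  set c : Fin n → ℂ := fun j => ∑ i, (S i j : ℂ) * x i with hc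
  have hq : qc S x c = ∑ j, (Complex.normSq (c j) : ℂ) := by
    unfold qc
    simp_rw [Complex.real_smul]
    rw [Finset.sum_comm]
    congr 1; ext j
    rw [← Complex.mul_conj, hc]
    simp_rw [Finset.sum_mul]
    refine Finset.sum_congr rfl fun i _ => ?_
    simp [Complex.star_def]; ring
  rw [hq, ← Complex.ofReal_sum, Complex.ofReal_re] at h
  have hc0 : ∀ j, c j = 0 := by
    intro j
    have := (Finset.sum_eq_zero_iff_of_nonneg
      (fun i _ => Complex.normSq_nonneg (c i))).mp h j (Finset.mem_univ j)
    exact Complex.normSq_eq_zero.mp this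
  funext k
  have hck : ∀ i, c i = ∑ m, (S i m : ℂ) * x m := by
    intro i; rw [hc]; exact Finset.sum_congr rfl fun m _ => by rw [hsym m i]
  calc x k = ∑ i, (S i k : ℂ) * ∑ m, (S i m : ℂ) * x m := (contract_aux S hSsymm hS2 x k).symm
    _ = ∑ i, (S i k : ℂ) * c i := by simp_rw [hck]
    _ = 0 := by simp [hc0]

lemma qc_zero_right {n : ℕ} (S : Matrix (Fin n) (Fin n) ℝ) (x : Fin n → ℂ) :
    qc S x 0 = 0 := by simp [qc]

lemma qc_zero_left {n : ℕ} (S : Matrix (Fin n) (Fin n) ℝ) (y : Fin n → ℂ) :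
    qc S 0 y = 0 := by simp [qc]

lemma qc_symm {n : ℕ} (S : Matrix (Fin n) (Fin n) ℝ)
    (hSsymm : S.transpose = S) (x y : Fin n → ℂ) :
    qc S y x = star (qc S x y) := by
  have hsym : ∀ a b, S a b = S b a := by
    intro a b; conv_lhs => rw [← hSsymm, Matrix.transpose_apply]
  unfold qc
  simp_rw [star_sum, star_smul, star_trivial, star_mul', star_star]
  rw [Finset.sum_comm]
  refine Finset.sum_congr rfl fun i _ => Finset.sum_congr rfl fun j _ => ?_
  rw [mul_comm, hsym j i]

/-- the above data `(𝔪, ⟨·|·⟩)` (the matricial model of the pseudo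
Div H-type Lie algebra `𝔥⁽²⁾(ℂ, S, γ)`) is a pseudo H-type Lie algebra whose
center is exactly `𝔤₋₂`, and the restriction of the scalar product to `𝔤₋₂` has
signature `(2,0)` if `γ = -1` and `(0,2)` if `γ = 1`. -/
theorem stmt8 (n : ℕ) (hn : 1 ≤ n) (S : Matrix (Fin n) (Fin n) ℝ)
    (hSsymm : S.transpose = S) (hS2 : S * S = 1)
    (γ : ℝ) (hγ : γ = 1 ∨ γ = -1) :
    -- the bracket is ℝ-bilinear, antisymmetric and 𝔪 is 2-step nilpotent
    (∀ a a' b, brc (n := n) (a + a') b = brc a b + brc a' b) ∧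
    (∀ (c : ℝ) (a b), brc (n := n) (c • a) b = c • brc a b) ∧
    (∀ a b, brc (n := n) a b = -brc b a) ∧
    (∃ a b, brc (n := n) a b ≠ 0) ∧
    (∀ a b c, brc (n := n) a (brc b c) = 0) ∧
    -- the center of 𝔪 is exactly 𝔤₋₂
    (∀ a, (∀ b, brc (n := n) a b = 0) ↔ a ∈ N2c n) ∧
    -- the scalar product is symmetric and non-degenerate
    (∀ a b, Bc S γ a b = Bc S γ b a) ∧
    (∀ a, (∀ b, Bc S γ a b = 0) → a = 0) ∧
    -- its restriction to the center is non-degenerate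
    (∀ z ∈ N2c n, (∀ w ∈ N2c n, Bc S γ z w = 0) → z = 0) ∧
    -- 𝔤₋₁ is the orthogonal complement of the center
    (∀ a, a ∈ N1c n ↔ ∀ z ∈ N2c n, Bc S γ a z = 0) ∧
    -- pseudo H-type: the maps J_z satisfy the Clifford condition
    (∃ J : ((Fin n → ℂ) × (Fin n → ℂ) × ℂ) → ((Fin n → ℂ) × (Fin n → ℂ) × ℂ) →
        ((Fin n → ℂ) × (Fin n → ℂ) × ℂ),
      ∀ z ∈ N2c n, ∀ x ∈ N1c n,
        J z x ∈ N1c n ∧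
        (∀ y ∈ N1c n, Bc S γ (J z x) y = Bc S γ z (brc x y)) ∧
        J z (J z x) = (-(Bc S γ z z)) • x) ∧
    -- signature of the restriction to 𝔤₋₂
    ((γ = -1 → ∀ z ∈ N2c n, z ≠ 0 → 0 < Bc S γ z z) ∧
     (γ = 1 → ∀ z ∈ N2c n, z ≠ 0 → Bc S γ z z < 0)) := by
  have hsym : ∀ a b, S a b = S b a := by
    intro a b; conv_lhs => rw [← hSsymm, Matrix.transpose_apply]
  have hγ0 : γ ≠ 0 := by rcases hγ with h | h <;> rw [h] <;> norm_num
  refine ⟨?_, ?_, ?_, ?_, ?_, ?_, ?_, ?_, ?_, ?_, ?_, ?_⟩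
  -- 1 additivity
  · intro a a' b
    simp only [brc, Prod.fst_add, Prod.snd_add, Pi.add_apply, Prod.mk_add_mk, add_zero,
      Prod.mk.injEq]
    refine ⟨trivial, trivial, ?_⟩
    simp only [add_mul, mul_add, Finset.sum_add_distrib]
    ring
  -- 2 smul
  · intro c a b
    simp only [brc, Prod.smul_fst, Prod.smul_snd, Pi.smul_apply, Prod.smul_mk, smul_zero,
      Prod.mk.injEq, Complex.real_smul]
    refine ⟨trivial, trivial, ?_⟩
    simp only [mul_sub, Finset.mul_sum]
    congr 1
    · exact Finset.sum_congr rfl fun i _ => by ring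
    · exact Finset.sum_congr rfl fun i _ => by ring
  -- 3 antisym
  · intro a b
    simp only [brc, Prod.neg_mk, neg_zero, neg_sub]
  -- 4 exists nonzero
  · refine ⟨(0, fun _ => 1, 0), (fun _ => 1, 0, 0), fun h => ?_⟩
    have h3 := congrArg (fun p => p.2.2) h
    simp only [brc, Prod.snd_zero, Prod.fst_zero] at h3
    simp [Finset.sum_const] at h3
    omega
  -- 5 2-step
  · intro a b c
    simp [brc, Prod.ext_iff]
  -- 6 center
  · intro a
    constructor
    · intro h
      have h3 := congrArg (fun p => p.2.2)
        (h (fun i => star (a.2.1 i), fun i => -star (a.1 i), 0))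
      simp only [brc, Prod.snd_zero] at h3
      have e1 : ∑ i, a.2.1 i * star (a.2.1 i)
          = ((∑ i, Complex.normSq (a.2.1 i) : ℝ) : ℂ) := by
        push_cast
        refine Finset.sum_congr rfl fun i _ => ?_
        simp [Complex.star_def, Complex.mul_conj]
      have e2 : ∑ i, (-star (a.1 i)) * a.1 i
          = -((∑ i, Complex.normSq (a.1 i) : ℝ) : ℂ) := by
        push_cast
        rw [← Finset.sum_neg_distrib]
        refine Finset.sum_congr rfl fun i _ => ?_
        rw [neg_mul, mul_comm]
        simp [Complex.star_def, Complex.mul_conj]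
      rw [e1, e2, sub_neg_eq_add, ← Complex.ofReal_add] at h3
      have hAB := Complex.ofReal_eq_zero.mp h3
      have hA1 := Finset.sum_nonneg (fun i (_ : i ∈ Finset.univ) => Complex.normSq_nonneg (a.2.1 i))
      have hA2 := Finset.sum_nonneg (fun i (_ : i ∈ Finset.univ) => Complex.normSq_nonneg (a.1 i))
      have hB1 : ∑ i, Complex.normSq (a.2.1 i) = 0 := by linarith
      have hB2 : ∑ i, Complex.normSq (a.1 i) = 0 := by linarith
      refine ⟨funext fun i => ?_, funext fun i => ?_⟩
      · exact Complex.normSq_eq_zero.mp ((Finset.sum_eq_zero_iff_of_nonneg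
          (fun i _ => Complex.normSq_nonneg (a.1 i))).mp hB2 i (Finset.mem_univ i))
      · exact Complex.normSq_eq_zero.mp ((Finset.sum_eq_zero_iff_of_nonneg
          (fun i _ => Complex.normSq_nonneg (a.2.1 i))).mp hB1 i (Finset.mem_univ i))
    · rintro ⟨h1, h2⟩ b
      simp [brc, h1, h2, Prod.ext_iff]
  -- 7 symmetry
  · intro a b
    unfold Bc
    rw [qc_symm S hSsymm a.1 b.1, qc_symm S hSsymm a.2.1 b.2.1,
        show b.2.2 * star a.2.2 = star (a.2.2 * star b.2.2) by rw [star_mul', star_star, mul_comm]]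
    simp [Complex.star_def, mul_comm]
  -- 8 nondegeneracy
  · intro a h
    have h3 := h (0, 0, a.2.2)
    simp only [Bc, qc_zero_right, Complex.zero_re, Complex.star_def, Complex.mul_conj,
      Complex.ofReal_re, mul_zero, zero_sub, sub_zero] at h3
    have hmul : γ * Complex.normSq a.2.2 = 0 := by linarith
    have ha3 : a.2.2 = 0 := by
      rcases mul_eq_zero.mp hmul with h' | h'
      · exact absurd h' hγ0
      · exact Complex.normSq_eq_zero.mp h'
    have h1 := h ((fun j => ∑ i, (S i j : ℂ) * a.1 i), 0, 0)
    simp only [Bc, qc_zero_right, Complex.zero_re, mul_zero, sub_zero, ha3, zero_mul] at h1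
    have ha1 : a.1 = 0 := qc_nondeg S hSsymm hS2 a.1 (by linarith)
    have h2 := h (0, (fun j => ∑ i, (S i j : ℂ) * a.2.1 i), 0)
    simp only [Bc, qc_zero_right, Complex.zero_re, mul_zero, sub_zero, ha3, zero_mul,
      zero_sub, neg_eq_zero] at h2
    have ha2 : a.2.1 = 0 := by
      refine qc_nondeg S hSsymm hS2 a.2.1 ?_
      rcases mul_eq_zero.mp h2 with h' | h'
      · exact absurd h' hγ0
      · exact h'
    simp [Prod.ext_iff, ha1, ha2, ha3]
  -- 9 restriction to the center is non-degenerate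
  · rintro z ⟨hz1, hz2⟩ h
    have hzz := h z ⟨hz1, hz2⟩
    simp only [Bc, hz1, hz2, qc_zero_left, Complex.zero_re, mul_zero, Complex.star_def,
      Complex.mul_conj, Complex.ofReal_re, zero_sub, sub_zero, neg_eq_zero] at hzz
    have hz3 : z.2.2 = 0 := by
      rcases mul_eq_zero.mp hzz with h' | h'
      · exact absurd h' hγ0
      · exact Complex.normSq_eq_zero.mp h'
    simp [Prod.ext_iff, hz1, hz2, hz3]
  -- 10 orthogonal complement
  · intro a
    constructor
    · rintro ha z ⟨hz1, hz2⟩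
      have ha' : a.2.2 = 0 := ha
      simp [Bc, hz1, hz2, qc_zero_right, ha']
    · intro h
      have h' := h (0, 0, a.2.2) ⟨rfl, rfl⟩
      simp only [Bc, qc_zero_right, Complex.zero_re, mul_zero, Complex.star_def,
        Complex.mul_conj, Complex.ofReal_re, zero_sub, sub_zero, neg_eq_zero] at h'
      show a.2.2 = 0
      rcases mul_eq_zero.mp h' with h'' | h''
      · exact absurd h'' hγ0
      · exact Complex.normSq_eq_zero.mp h''
  -- 11 the maps J_z
  · refine ⟨fun z x =>
      (fun i => -(γ : ℂ) * z.2.2 * ∑ j, (S i j : ℂ) * star (x.2.1 j),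
       fun i => -z.2.2 * ∑ j, (S i j : ℂ) * star (x.1 j), 0), ?_⟩
    rintro z ⟨hz1, hz2⟩ x hx
    have hx3 : x.2.2 = 0 := hx
    refine ⟨rfl, ?_, ?_⟩
    · intro y hy
      have hy3 : y.2.2 = 0 := hy
      have e1 : qc S (fun i => -(γ:ℂ) * z.2.2 * ∑ j, (S i j : ℂ) * star (x.2.1 j)) y.1
          = -(γ:ℂ) * z.2.2 * ∑ j, star (x.2.1 j) * star (y.1 j) :=
        qc_special S hSsymm hS2 _ _ _
      have e2 : qc S (fun i => -z.2.2 * ∑ j, (S i j : ℂ) * star (x.1 j)) y.2.1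
          = -z.2.2 * ∑ j, star (x.1 j) * star (y.2.1 j) :=
        qc_special S hSsymm hS2 _ _ _
      have estar : star ((∑ i, x.2.1 i * y.1 i) - ∑ i, y.2.1 i * x.1 i)
          = (∑ j, star (x.2.1 j) * star (y.1 j)) - ∑ j, star (x.1 j) * star (y.2.1 j) := by
        rw [star_sub, star_sum, star_sum]
        congr 1
        · exact Finset.sum_congr rfl fun i _ => by rw [star_mul']
        · exact Finset.sum_congr rfl fun i _ => by rw [star_mul', mul_comm]
      simp only [Bc, brc, hz1, hz2, qc_zero_left, Complex.zero_re, mul_zero, e1, e2, hy3,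
        star_zero, zero_sub, zero_mul, sub_zero, estar]
      set A := ∑ j, star (x.2.1 j) * star (y.1 j) with hA
      set B := ∑ j, star (x.1 j) * star (y.2.1 j) with hB
      simp only [neg_mul, mul_assoc, Complex.neg_re, Complex.re_ofReal_mul, mul_sub,
        Complex.sub_re]
      ring
    · have hBzz : -(Bc S γ z z) = γ * Complex.normSq z.2.2 := by
        simp only [Bc, hz1, hz2, qc_zero_left, Complex.zero_re, mul_zero, Complex.star_def,
          Complex.mul_conj, Complex.ofReal_re, zero_sub, sub_zero, neg_neg]
      rw [hBzz]
      have inner1 : ∀ (w : Fin n → ℂ) (c : ℂ) (j : Fin n),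
          star (c * ∑ k, (S j k : ℂ) * star (w k)) = star c * ∑ k, (S j k : ℂ) * w k := by
        intro w c j
        rw [star_mul', star_sum]
        congr 1
        refine Finset.sum_congr rfl fun k _ => ?_
        rw [star_mul', star_star, Complex.star_def, Complex.conj_ofReal]
      have pull : ∀ (c : ℂ) (f : Fin n → ℂ) (i : Fin n),
          ∑ j, (S i j : ℂ) * (c * f j) = c * ∑ j, (S i j : ℂ) * f j := by
        intro c f i
        rw [Finset.mul_sum]
        exact Finset.sum_congr rfl fun j _ => by ring
      refine Prod.ext_iff.mpr ⟨funext fun i => ?_, Prod.ext_iff.mpr ⟨funext fun i => ?_, ?_⟩⟩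
      · show -(γ:ℂ) * z.2.2 * ∑ j, (S i j : ℂ) *
            star (-z.2.2 * ∑ k, (S j k : ℂ) * star (x.1 k))
          = ((γ * Complex.normSq z.2.2) • x.1) i
        simp_rw [inner1 x.1 (-z.2.2)]
        rw [pull, contract_aux' S hSsymm hS2 x.1 i]
        rw [Pi.smul_apply, Complex.real_smul, Complex.ofReal_mul, ← Complex.mul_conj]
        simp only [Complex.star_def, star_neg]
        ring
      · show -z.2.2 * ∑ j, (S i j : ℂ) *
            star (-(γ:ℂ) * z.2.2 * ∑ k, (S j k : ℂ) * star (x.2.1 k))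
          = ((γ * Complex.normSq z.2.2) • x.2.1) i
        simp_rw [inner1 x.2.1 (-(γ:ℂ) * z.2.2)]
        rw [pull, contract_aux' S hSsymm hS2 x.2.1 i]
        rw [Pi.smul_apply, Complex.real_smul, Complex.ofReal_mul, ← Complex.mul_conj]
        simp only [Complex.star_def, star_neg, star_mul', Complex.conj_ofReal]
        ring
      · show (0 : ℂ) = ((γ * Complex.normSq z.2.2) • x).2.2
        simp [hx3]
  -- 12 signature
  · have key : ∀ z : (Fin n → ℂ) × (Fin n → ℂ) × ℂ, z ∈ N2c n → z ≠ 0 →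
        Bc S γ z z = -γ * Complex.normSq z.2.2 ∧ 0 < Complex.normSq z.2.2 := by
      rintro z ⟨hz1, hz2⟩ hz0
      have hz3 : z.2.2 ≠ 0 := by
        intro h0
        exact hz0 (by simp [Prod.ext_iff, hz1, hz2, h0])
      refine ⟨?_, Complex.normSq_pos.mpr hz3⟩
      simp only [Bc, hz1, hz2, qc_zero_left, Complex.zero_re, mul_zero, Complex.star_def,
        Complex.mul_conj, Complex.ofReal_re, zero_sub, sub_zero]
      ring
    constructor
    · intro hγ1 z hz hz0
      obtain ⟨h1, h2⟩ := key z hz hz0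
      rw [h1, hγ1]; linarith
    · intro hγ1 z hz hz0
      obtain ⟨h1, h2⟩ := key z hz hz0
      rw [h1, hγ1]; linarith
end
end

section
/- Let (𝔫, ⟨·|·⟩) be a pseudo H-type Lie algebra and let x ∈ 𝔫₋₁ satisfy ⟨x|x⟩ ≠ 0. Then the subspace 𝔫₋₁(x) = ℝx + {J_z(x) : z ∈ 𝔫₋₂} is a non-degenerate subspace of (𝔫₋₁, ⟨·|·⟩): the restriction of ⟨·|·⟩ to 𝔫₋₁(x) is a non-degenerate bilinear form. -/
open LinearMap (BilinForm)
open LinearMap.BilinForm Submodule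

theorem LinearMap.BilinForm.eq_of_separatingLeft_restrict {R M : Type*} [CommRing R]
    [AddCommGroup M] [Module R M] {B : BilinForm R M} {N : Submodule R M}
    (hN : (B.restrict N).SeparatingLeft) {p q : M} (hp : p ∈ N) (hq : q ∈ N)
    (h : ∀ y ∈ N, B p y = B q y) : p = q := by
  have := hN ⟨p - q, N.sub_mem hp hq⟩ fun y => by simp [h y y.2]
  exact sub_eq_zero.1 (congrArg Subtype.val this)

theorem LinearMap.BilinForm.separatingLeft_restrict_orthogonal {K V : Type*} [Field K]
    [AddCommGroup V] [Module K V] [FiniteDimensional K V] {B : BilinForm K V}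
    (hB : B.SeparatingLeft) (hB₀ : B.IsRefl) {W : Submodule K V}
    (hW : (B.restrict W).Nondegenerate) : (B.restrict (B.orthogonal W)).SeparatingLeft := by
  rintro ⟨m, hm⟩ hmW
  have hsup := (isCompl_orthogonal_of_restrict_nondegenerate hB₀ hW).sup_eq_top
  refine Subtype.ext (hB m fun v => ?_)
  obtain ⟨y, hy, z, hz, rfl⟩ := mem_sup.1 (hsup ▸ mem_top : v ∈ W ⊔ B.orthogonal W)
  rw [map_add, hB₀ y m (hm y hy), show B m z = 0 from hmW ⟨z, hz⟩, add_zero]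

section

variable {K L : Type*} [Field K] [LieRing L] [LieAlgebra K L]

/-- `J z` is the paper's `J_z` on `N = 𝔫₋₁` for `z ∈ Z = 𝔫₋₂`; its values off `N` play no role. -/
structure IsJMap (B : BilinForm K L) (Z N : Submodule K L) (J : L → L →ₗ[K] L) : Prop where
  separatingLeft_restrict : (B.restrict N).SeparatingLeft
  mapsTo : ∀ z ∈ Z, ∀ x ∈ N, J z x ∈ N
  apply_left : ∀ z ∈ Z, ∀ x ∈ N, ∀ y ∈ N, B (J z x) y = B z ⁅x, y⁆

namespace IsJMap

variable {B : BilinForm K L} {Z N : Submodule K L} {J : L → L →ₗ[K] L} {z w x y : L}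

theorem add (hJ : IsJMap B Z N J) (hz : z ∈ Z) (hw : w ∈ Z) (hx : x ∈ N) :
    J (z + w) x = J z x + J w x :=
  eq_of_separatingLeft_restrict hJ.separatingLeft_restrict (hJ.mapsTo _ (Z.add_mem hz hw) _ hx)
    (N.add_mem (hJ.mapsTo _ hz _ hx) (hJ.mapsTo _ hw _ hx)) fun y hy => by
      rw [hJ.apply_left _ (Z.add_mem hz hw) _ hx _ hy, map_add, map_add, LinearMap.add_apply,
        LinearMap.add_apply, hJ.apply_left _ hz _ hx _ hy, hJ.apply_left _ hw _ hx _ hy]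

theorem smul (hJ : IsJMap B Z N J) (c : K) (hz : z ∈ Z) (hx : x ∈ N) :
    J (c • z) x = c • J z x :=
  eq_of_separatingLeft_restrict hJ.separatingLeft_restrict (hJ.mapsTo _ (Z.smul_mem c hz) _ hx)
    (N.smul_mem c (hJ.mapsTo _ hz _ hx)) fun y hy => by
      rw [hJ.apply_left _ (Z.smul_mem c hz) _ hx _ hy, map_smul, map_smul, LinearMap.smul_apply,
        LinearMap.smul_apply, hJ.apply_left _ hz _ hx _ hy]

theorem zero (hJ : IsJMap B Z N J) (hx : x ∈ N) : J 0 x = 0 := by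
  simpa using hJ.smul 0 Z.zero_mem hx

theorem exists_eq_smul_add_of_mem_span (hJ : IsJMap B Z N J) (hx : x ∈ N)
    (hy : y ∈ span K ({x} ∪ {v : L | ∃ w ∈ Z, v = J w x})) :
    ∃ c : K, ∃ z ∈ Z, y = c • x + J z x := by
  induction hy using span_induction with
  | mem y hy =>
    rcases hy with rfl | ⟨z, hz, rfl⟩
    · exact ⟨1, 0, Z.zero_mem, by rw [hJ.zero hx, one_smul, add_zero]⟩
    · exact ⟨0, z, hz, by rw [zero_smul, zero_add]⟩
  | zero => exact ⟨0, 0, Z.zero_mem, by rw [hJ.zero hx, zero_smul, add_zero]⟩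
  | add u v _ _ hu hv =>
    obtain ⟨c, z, hz, rfl⟩ := hu
    obtain ⟨d, w, hw, rfl⟩ := hv
    refine ⟨c + d, z + w, Z.add_mem hz hw, ?_⟩
    rw [hJ.add hz hw hx, add_smul]
    abel
  | smul a v _ hv =>
    obtain ⟨c, z, hz, rfl⟩ := hv
    refine ⟨a * c, a • z, Z.smul_mem a hz, ?_⟩
    rw [hJ.smul a hz hx, smul_add, mul_smul]

theorem apply_swap (hJ : IsJMap B Z N J) (hz : z ∈ Z) (hx : x ∈ N) (hy : y ∈ N) :
    B (J z x) y = -B (J z y) x := by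
  rw [hJ.apply_left _ hz _ hx _ hy, hJ.apply_left _ hz _ hy _ hx, ← lie_skew, map_neg]

theorem apply_self (hJ : IsJMap B Z N J) (hz : z ∈ Z) (hx : x ∈ N) : B (J z x) x = 0 := by
  rw [hJ.apply_left _ hz _ hx _ hx, lie_self, map_zero]

theorem anticomm (hJ : IsJMap B Z N J) (hB : B.IsSymm)
    (hJsq : ∀ z ∈ Z, ∀ x ∈ N, J z (J z x) = -(B z z) • x) (hz : z ∈ Z) (hw : w ∈ Z)
    (hx : x ∈ N) : J z (J w x) + J w (J z x) = -(2 * B z w) • x := by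
  have hsq := hJsq _ (Z.add_mem hz hw) _ hx
  rw [hJ.add hz hw hx, map_add, hJ.add hz hw (hJ.mapsTo _ hz _ hx),
    hJ.add hz hw (hJ.mapsTo _ hw _ hx), hJsq _ hz _ hx, hJsq _ hw _ hx] at hsq
  simp only [map_add, LinearMap.add_apply, hB.eq w z] at hsq
  linear_combination (norm := module) hsq

theorem apply_apply [NeZero (2 : K)] (hJ : IsJMap B Z N J) (hB : B.IsSymm)
    (hJsq : ∀ z ∈ Z, ∀ x ∈ N, J z (J z x) = -(B z z) • x) (hz : z ∈ Z) (hw : w ∈ Z)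
    (hx : x ∈ N) : B (J z x) (J w x) = B z w * B x x := by
  have hzw := hJ.apply_swap hz hx (hJ.mapsTo _ hw _ hx)
  have hwz := hJ.apply_swap hw hx (hJ.mapsTo _ hz _ hx)
  have hsum := congrArg (B · x) (hJ.anticomm hB hJsq hz hw hx)
  simp only [map_add, map_smul, LinearMap.add_apply, LinearMap.smul_apply, smul_eq_mul] at hsum
  have h2 : (2 : K) * B (J z x) (J w x) = 2 * (B z w * B x x) := by
    linear_combination hzw + hwz + hB.eq (J z x) (J w x) - hsum
  exact mul_left_cancel₀ two_ne_zero h2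

theorem separatingLeft_restrict_span [NeZero (2 : K)] (hJ : IsJMap B Z N J) (hB : B.IsSymm)
    (hZ : (B.restrict Z).SeparatingLeft)
    (hJsq : ∀ z ∈ Z, ∀ x ∈ N, J z (J z x) = -(B z z) • x) (hx : x ∈ N) (hxx : B x x ≠ 0) :
    (B.restrict (span K ({x} ∪ {v : L | ∃ w ∈ Z, v = J w x}))).SeparatingLeft := by
  rintro ⟨v, hv⟩ hperp
  obtain ⟨c, z, hz, rfl⟩ := hJ.exists_eq_smul_add_of_mem_span hx hv
  have hc : c = 0 := by
    have : B (c • x + J z x) x = 0 := hperp ⟨x, subset_span (Or.inl rfl)⟩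
    simp only [map_add, LinearMap.add_apply, map_smul, LinearMap.smul_apply, smul_eq_mul,
      hJ.apply_self hz hx, add_zero] at this
    exact (mul_eq_zero.1 this).resolve_right hxx
  have hz0 : z = 0 := by
    refine congrArg Subtype.val (hZ ⟨z, hz⟩ fun ⟨w, hw⟩ => ?_)
    have : B (c • x + J z x) (J w x) = 0 := hperp ⟨J w x, subset_span (Or.inr ⟨w, hw, rfl⟩)⟩
    rw [hc, zero_smul, zero_add, hJ.apply_apply hB hJsq hz hw hx] at this
    exact (mul_eq_zero.1 this).resolve_right hxx
  ext
  simp [hc, hz0, hJ.zero hx]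

end IsJMap

end

theorem stmt11_general
    (L : Type*) [LieRing L] [LieAlgebra ℝ L] [FiniteDimensional ℝ L]
    (B : L →ₗ[ℝ] L →ₗ[ℝ] ℝ)
    (hsymm : ∀ a b : L, B a b = B b a)
    (hnondeg : ∀ a : L, (∀ b : L, B a b = 0) → a = 0)
    (hctrnd : ∀ z ∈ ctr L, (∀ w ∈ ctr L, B z w = 0) → z = 0)
    (n1 : Submodule ℝ L)
    (hn : ∀ x : L, x ∈ n1 ↔ ∀ z ∈ ctr L, B x z = 0)
    (J : L → L →ₗ[ℝ] L)
    (hJmap : ∀ z ∈ ctr L, ∀ x ∈ n1, J z x ∈ n1)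
    (hJdef : ∀ z ∈ ctr L, ∀ x ∈ n1, ∀ y ∈ n1, B (J z x) y = B z ⁅x, y⁆)
    (hJsq : ∀ z ∈ ctr L, ∀ x ∈ n1, J z (J z x) = -(B z z) • x) :
    ∀ x ∈ n1, B x x ≠ 0 →
      ∀ v ∈ Submodule.span ℝ ({x} ∪ {v : L | ∃ w ∈ ctr L, v = J w x}),
        (∀ w ∈ Submodule.span ℝ ({x} ∪ {v : L | ∃ w' ∈ ctr L, v = J w' x}), B v w = 0) →
        v = 0 := by
  have hB : IsSymm B := isSymm_def.2 hsymm
  have hctr : (restrict B (ctr L)).SeparatingLeft :=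
    fun z hz => Subtype.ext (hctrnd z z.2 fun w hw => hz ⟨w, hw⟩)
  have hn1 : n1 = orthogonal B (ctr L) := by
    ext u
    rw [hn, mem_orthogonal_iff]
    exact forall₂_congr fun z _ => ⟨hB.isRefl _ _, hB.isRefl _ _⟩
  have hJ : IsJMap B (ctr L) n1 J :=
    ⟨hn1 ▸ separatingLeft_restrict_orthogonal hnondeg hB.isRefl
      ((hB.restrict _).isRefl.nondegenerate_iff_separatingLeft.2 hctr), hJmap, hJdef⟩
  intro x hx hxx v hv hperp
  exact congrArg Subtype.val
    (hJ.separatingLeft_restrict_span hB hctr hJsq hx hxx ⟨v, hv⟩ fun w => hperp w w.2)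

/-- for x ∈ 𝔫₋₁ with ⟨x|x⟩ ≠ 0, the subspace
𝔫₋₁(x) = ℝx + J_{𝔫₋₂}(x) is non-degenerate. -/
theorem stmt11
    (L : Type*) [LieRing L] [LieAlgebra ℝ L] [FiniteDimensional ℝ L]
    (B : L →ₗ[ℝ] L →ₗ[ℝ] ℝ)
    (hsymm : ∀ a b : L, B a b = B b a)
    (hnondeg : ∀ a : L, (∀ b : L, B a b = 0) → a = 0)
    (h2stepA : ∃ a b : L, ⁅a, b⁆ ≠ 0)
    (h2stepB : ∀ a b c : L, ⁅a, ⁅b, c⁆⁆ = 0)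
    (hctrnd : ∀ z ∈ ctr L, (∀ w ∈ ctr L, B z w = 0) → z = 0)
    (n1 : Submodule ℝ L)
    (hn : ∀ x : L, x ∈ n1 ↔ ∀ z ∈ ctr L, B x z = 0)
    (J : L → L →ₗ[ℝ] L)
    (hJmap : ∀ z ∈ ctr L, ∀ x ∈ n1, J z x ∈ n1)
    (hJdef : ∀ z ∈ ctr L, ∀ x ∈ n1, ∀ y ∈ n1, B (J z x) y = B z ⁅x, y⁆)
    (hJsq : ∀ z ∈ ctr L, ∀ x ∈ n1, J z (J z x) = -(B z z) • x) :
    ∀ x ∈ n1, B x x ≠ 0 →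
      ∀ v ∈ Submodule.span ℝ ({x} ∪ {v : L | ∃ w ∈ ctr L, v = J w x}),
        (∀ w ∈ Submodule.span ℝ ({x} ∪ {v : L | ∃ w' ∈ ctr L, v = J w' x}), B v w = 0) →
        v = 0 :=
  stmt11_general L B hsymm hnondeg hctrnd n1 hn J hJmap hJdef hJsq
end

section
/- Let (𝔫, ⟨·|·⟩) be a pseudo H-type Lie algebra and let x ∈ 𝔫₋₁ satisfy ⟨x|x⟩ ≠ 0. Then the linear map ℝ × 𝔫₋₂ → 𝔫₋₁ given by (λ, z) ↦ λx + J_z(x) is injective: if λx + J_z(x) = 0 for some λ ∈ ℝ and z ∈ 𝔫₋₂, then λ = 0 and z = 0. -/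
/-- for x ∈ 𝔫₋₁ with ⟨x|x⟩ ≠ 0, the map (λ, z) ↦ λx + J_z(x) is
injective. -/
theorem stmt12
    (L : Type*) [LieRing L] [LieAlgebra ℝ L] [FiniteDimensional ℝ L]
    (B : L →ₗ[ℝ] L →ₗ[ℝ] ℝ)
    (hsymm : ∀ a b : L, B a b = B b a)
    (hnondeg : ∀ a : L, (∀ b : L, B a b = 0) → a = 0)
    (h2stepA : ∃ a b : L, ⁅a, b⁆ ≠ 0)
    (h2stepB : ∀ a b c : L, ⁅a, ⁅b, c⁆⁆ = 0)
    (hctrnd : ∀ z ∈ ctr L, (∀ w ∈ ctr L, B z w = 0) → z = 0)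
    (n1 : Submodule ℝ L)
    (hn : ∀ x : L, x ∈ n1 ↔ ∀ z ∈ ctr L, B x z = 0)
    (J : L → L →ₗ[ℝ] L)
    (hJmap : ∀ z ∈ ctr L, ∀ x ∈ n1, J z x ∈ n1)
    (hJdef : ∀ z ∈ ctr L, ∀ x ∈ n1, ∀ y ∈ n1, B (J z x) y = B z ⁅x, y⁆)
    (hJsq : ∀ z ∈ ctr L, ∀ x ∈ n1, J z (J z x) = -(B z z) • x) :
    ∀ x ∈ n1, B x x ≠ 0 →
      ∀ (lam : ℝ), ∀ z ∈ ctr L, lam • x + J z x = 0 → lam = 0 ∧ z = 0 := by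
  intro x hx hBx lam z hz heq
  have hJx_x : B (J z x) x = 0 := by
    rw [hJdef z hz x hx x hx, lie_self, map_zero]
  have hlam : lam = 0 := by
    have h0 : B (lam • x + J z x) x = 0 := by rw [heq]; simp
    have : lam * B x x = 0 := by
      simpa [map_add, map_smul, hJx_x, smul_eq_mul] using h0
    exact (mul_eq_zero.mp this).resolve_right hBx
  have hJz0 : J z x = 0 := by
    rw [hlam, zero_smul, zero_add] at heq; exact heq
  -- key norm identity: B (J c x) (J c x) = B c c * B x x for central c
  have key : ∀ c ∈ ctr L, B (J c x) (J c x) = B c c * B x x := by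
    intro c hc
    have hcx := hJmap c hc x hx
    have h1 : B (J c (J c x)) x = B c ⁅J c x, x⁆ := hJdef c hc _ hcx x hx
    have h2 : B (J c x) (J c x) = B c ⁅x, J c x⁆ := hJdef c hc x hx _ hcx
    have h3 : (⁅J c x, x⁆ : L) = -⁅x, J c x⁆ := by
      rw [← lie_skew]
    have h4 : B (J c (J c x)) x = -(B c c * B x x) := by
      rw [hJsq c hc x hx]; simp [smul_eq_mul]
    rw [h3, map_neg] at h1
    rw [h2]
    linarith [h1, h4]
  have hzz : B z z = 0 := by
    have hk := key z hz
    rw [hJz0] at hk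
    simp only [map_zero, LinearMap.zero_apply] at hk
    rcases mul_eq_zero.mp hk.symm with h | h
    · exact h
    · exact absurd h hBx
  refine ⟨hlam, hctrnd z hz ?_⟩
  intro w hw
  have hc : z + w ∈ ctr L := (ctr L).add_mem hz hw
  have hwx := hJmap w hw x hx
  have hcx := hJmap (z + w) hc x hx
  -- B (J w x) (J w x) = B w w * B x x
  have hww := key w hw
  -- B (J (z+w) x) (J (z+w) x) = B w w * B x x
  have e1 : B (J (z + w) x) (J (z + w) x) = B w w * B x x := by
    have ha : B (J (z + w) x) (J (z + w) x)
        = B z ⁅x, J (z + w) x⁆ + B w ⁅x, J (z + w) x⁆ := by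
      rw [hJdef (z + w) hc x hx _ hcx, map_add B z w, LinearMap.add_apply]
    have ez : B z ⁅x, J (z + w) x⁆ = 0 := by
      rw [← hJdef z hz x hx _ hcx, hJz0]; simp
    have ew : B w ⁅x, J (z + w) x⁆ = B (J w x) (J (z + w) x) :=
      (hJdef w hw x hx _ hcx).symm
    have eb : B (J w x) (J (z + w) x) = B w w * B x x := by
      have hb : B (J (z + w) x) (J w x)
          = B z ⁅x, J w x⁆ + B w ⁅x, J w x⁆ := by
        rw [hJdef (z + w) hc x hx _ hwx, map_add B z w, LinearMap.add_apply]
      have ez' : B z ⁅x, J w x⁆ = 0 := by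
        rw [← hJdef z hz x hx _ hwx, hJz0]; simp
      have ew' : B w ⁅x, J w x⁆ = B (J w x) (J w x) := (hJdef w hw x hx _ hwx).symm
      rw [hsymm (J w x) (J (z + w) x), hb, ez', ew', hww, zero_add]
    rw [ha, ez, ew, eb, zero_add]
  have e2 := key (z + w) hc
  have e3 : B (z + w) (z + w) = 2 * B z w + B w w := by
    simp only [map_add, LinearMap.add_apply]
    rw [hzz, hsymm w z]; ring
  rw [e1, e3] at e2
  have : 2 * B z w * B x x = 0 := by linarith [e2]
  rcases mul_eq_zero.mp this with h | h
  · rcases mul_eq_zero.mp h with h' | h'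
    · norm_num at h'
    · exact h'
  · exact absurd h hBx
end
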